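/- arXiv:2507.20260 — 4 statements merged into one kernel-verified Lean document; each statement's English description precedes it below -/
import Mathlib

section
/- For n > 4, the number R_2(n) of partitions of n with Durfee triangle size exactly 2 equals 2n - 4 if n is even, and 2n - 5 if n is odd. -/
/-- The `i`-th largest part (1-indexed) of a partition, or `0` if out of range. -/
def part {n : ℕ} (p : n.Partition) (i : ℕ) : ℕ :=
  (p.parts.sort (· ≥ ·)).getD (i - 1) 0

open Classical in
/-- The size of the Durfee triangle of a partition: the largest `k` such that
`λ_i ≥ k + 1 - i` for all `1 ≤ i ≤ k`. -/
noncomputable def durfee {n : ℕ} (p : n.Partition) : ℕ :=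
  Nat.findGreatest (fun k => ∀ i ∈ Finset.Icc 1 k, k + 1 ≤ part p i + i) n

open Classical in
/-- `R k n` : the number of partitions of `n` with Durfee triangle size exactly `k`. -/
noncomputable def R (k n : ℕ) : ℕ :=
  (Finset.univ.filter fun p : n.Partition => durfee p = k).card

/-- The partition function. -/
def P (n : ℕ) : ℕ := Fintype.card n.Partition

/-- The maximal Durfee triangle size among partitions of `n`. -/
noncomputable def F (n : ℕ) : ℕ := Finset.univ.sup fun p : n.Partition => durfee p

section Aux

private lemma sort_unique {s : Multiset ℕ} {L : List ℕ}
    (h : (L : Multiset ℕ) = s) (hL : L.Pairwise (· ≥ ·)) :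
    s.sort (· ≥ ·) = L := by
  refine List.Perm.eq_of_pairwise (fun a b _ _ h1 h2 => le_antisymm h2 h1) (Multiset.pairwise_sort s _) hL ?_
  rw [← Multiset.coe_eq_coe, Multiset.sort_eq, h]

private lemma durfee_eq_two_iff {n : ℕ} (hn : 3 ≤ n) (p : n.Partition) :
    durfee p = 2 ↔ (2 ≤ part p 1 ∧ 1 ≤ part p 2) ∧
      ¬(3 ≤ part p 1 ∧ 2 ≤ part p 2 ∧ 1 ≤ part p 3) := by
  haveI hdec : DecidablePred (fun k => ∀ i ∈ Finset.Icc 1 k, k + 1 ≤ part p i + i) :=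
    fun _ => Finset.decidableDforallFinset
  have hmono : ∀ k, (∀ i ∈ Finset.Icc 1 (k+1), k + 2 ≤ part p i + i) →
      (∀ i ∈ Finset.Icc 1 k, k + 1 ≤ part p i + i) := by
    intro k h i hi
    rw [Finset.mem_Icc] at hi
    have := h i (Finset.mem_Icc.mpr ⟨hi.1, hi.2.trans (Nat.le_succ _)⟩)
    omega
  have hd : durfee p =
      @Nat.findGreatest (fun k => ∀ i ∈ Finset.Icc 1 k, k + 1 ≤ part p i + i) hdec n := by
    unfold durfee
    congr!
  constructor
  · intro h
    rw [hd, Nat.findGreatest_eq_iff] at h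
    obtain ⟨-, h2, h3⟩ := h
    have hP2 := h2 (by norm_num)
    refine ⟨⟨by have := hP2 1 (by decide); omega, by have := hP2 2 (by decide); omega⟩, ?_⟩
    rintro ⟨ha, hb, hc⟩
    refine h3 (by norm_num) hn ?_
    intro i hi
    obtain ⟨hi1, hi2⟩ := Finset.mem_Icc.mp hi
    interval_cases i <;> omega
  · rintro ⟨⟨h1, h2⟩, h3⟩
    rw [hd, Nat.findGreatest_eq_iff]
    refine ⟨by omega, fun _ i hi => ?_, fun m hm hmn hPm => ?_⟩
    · obtain ⟨hi1, hi2⟩ := Finset.mem_Icc.mp hi; interval_cases i <;> omega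
    · have key : ∀ j, (∀ i ∈ Finset.Icc 1 (3 + j), 3 + j + 1 ≤ part p i + i) →
          ∀ i ∈ Finset.Icc 1 3, 4 ≤ part p i + i := by
        intro j
        induction j with
        | zero => exact fun h => h
        | succ j ih =>
          intro h
          exact ih (hmono (3 + j) (by intro i hi; have := h i hi; omega))
      obtain ⟨j, rfl⟩ : ∃ j, m = 3 + j := ⟨m - 3, by omega⟩
      have hP3 := key j hPm
      refine h3 ⟨?_, ?_, ?_⟩
      · have := hP3 1 (by decide); omega
      · have := hP3 2 (by decide); omega
      · have := hP3 3 (by decide); omega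

private def twoPart (n b : ℕ) (hb : b ∈ Finset.Icc 1 (n / 2)) : n.Partition where
  parts := {n - b, b}
  parts_pos := by
    rw [Finset.mem_Icc] at hb
    intro i hi
    simp only [Multiset.insert_eq_cons, Multiset.mem_cons, Multiset.mem_singleton] at hi
    rcases hi with rfl | rfl <;> omega
  parts_sum := by
    rw [Finset.mem_Icc] at hb
    simp only [Multiset.insert_eq_cons, Multiset.sum_cons, Multiset.sum_singleton]
    omega

private def hookPart (n a : ℕ) (ha : a ∈ Finset.Icc 2 (n - 2)) : n.Partition where
  parts := a ::ₘ Multiset.replicate (n - a) 1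
  parts_pos := by
    rw [Finset.mem_Icc] at ha
    intro i hi
    simp only [Multiset.mem_cons, Multiset.mem_replicate] at hi
    rcases hi with rfl | ⟨-, rfl⟩ <;> omega
  parts_sum := by
    rw [Finset.mem_Icc] at ha
    simp only [Multiset.sum_cons, Multiset.sum_replicate, smul_eq_mul, mul_one]
    omega

private def twosPart (n j : ℕ) (hj : j ∈ Finset.Icc 2 (n / 2)) : n.Partition where
  parts := Multiset.replicate j 2 + Multiset.replicate (n - 2 * j) 1
  parts_pos := by
    intro i hi
    simp only [Multiset.mem_add, Multiset.mem_replicate] at hi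
    rcases hi with ⟨-, rfl⟩ | ⟨-, rfl⟩ <;> omega
  parts_sum := by
    rw [Finset.mem_Icc] at hj
    simp only [Multiset.sum_add, Multiset.sum_replicate, smul_eq_mul, mul_one, mul_two]
    omega

private def Aset (n : ℕ) : Finset n.Partition :=
  (Finset.Icc 1 (n / 2)).attach.image fun x => twoPart n x.1 x.2

private def Bset (n : ℕ) : Finset n.Partition :=
  (Finset.Icc 2 (n - 2)).attach.image fun x => hookPart n x.1 x.2

private def Cset (n : ℕ) : Finset n.Partition :=
  (Finset.Icc 2 (n / 2)).attach.image fun x => twosPart n x.1 x.2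

private lemma sorted_replicate_one (m : ℕ) : (List.replicate m 1).Pairwise (· ≥ ·) :=
  List.pairwise_replicate.mpr (Or.inr le_rfl)

private lemma mem_union_iff {n : ℕ} (hn : 4 < n) (p : n.Partition) :
    durfee p = 2 ↔ p ∈ Aset n ∪ Bset n ∪ Cset n := by
  classical
  rw [durfee_eq_two_iff (by omega) p]
  set l := p.parts.sort (· ≥ ·) with hl
  have hpl : (l : Multiset ℕ) = p.parts := Multiset.sort_eq _ _
  have hsort : l.Pairwise (· ≥ ·) := Multiset.pairwise_sort _ _
  have hpos : ∀ x ∈ l, 0 < x := fun x hx =>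
    p.parts_pos (hpl ▸ Multiset.mem_coe.mpr hx)
  have hsum : l.sum = n := by
    have := p.parts_sum
    rwa [← hpl, Multiset.sum_coe] at this
  have hpart : ∀ i, part p (i + 1) = l.getD i 0 := fun i => rfl
  constructor
  · rintro ⟨⟨h1, h2⟩, h3⟩
    rw [show part p 1 = l.getD 0 0 from hpart 0] at h1 h3
    rw [show part p 2 = l.getD 1 0 from hpart 1] at h2 h3
    rw [show part p 3 = l.getD 2 0 from hpart 2] at h3
    match hll : l, h1, h2, h3 with
    | [], h1, h2, h3 => simp at h1
    | [a], h1, h2, h3 => simp at h2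
    | [a, b], h1, h2, h3 =>
      -- two parts : p ∈ Aset
      simp only [List.getD_cons_zero, List.getD_cons_succ] at h1 h2
      simp only [List.sum_cons, List.sum_nil, add_zero] at hsum
      have hba : b ≤ a := by
        rw [List.pairwise_cons] at hsort
        exact hsort.1 b (by simp)
      have hb : b ∈ Finset.Icc 1 (n / 2) := Finset.mem_Icc.mpr ⟨h2, by omega⟩
      refine Finset.mem_union_left _ (Finset.mem_union_left _ ?_)
      rw [Aset, Finset.mem_image]
      refine ⟨⟨b, hb⟩, Finset.mem_attach _ _, ?_⟩
      apply Nat.Partition.ext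
      show ({n - b, b} : Multiset ℕ) = p.parts
      rw [← hpl]
      have : n - b = a := by omega
      rw [this]
      rfl
    | a :: b :: c :: t, h1, h2, h3 =>
      simp only [List.getD_cons_zero, List.getD_cons_succ] at h1 h2 h3
      have hc1 : 1 ≤ c := hpos c (by simp)
      have hab : b ≤ a ∧ c ≤ b ∧ ∀ x ∈ t, x ≤ c := by
        simp only [List.pairwise_cons] at hsort
        exact ⟨hsort.1 b (by simp), hsort.2.1 c (by simp),
          fun x hx => hsort.2.2.1 x (by simp [hx])⟩
      have hcase : a = 2 ∨ b = 1 := by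
        by_contra hcon
        push_neg at hcon
        exact h3 ⟨by omega, by omega, by omega⟩
      rcases eq_or_lt_of_le (Nat.succ_le_of_lt (hpos b (by simp)) : 1 ≤ b) with hb1 | hb2
      · -- b = 1 : hook case, p ∈ Bset
        have hb1 : b = 1 := hb1.symm
        have hc : c = 1 := by have := hab.2.1; omega
        have ht : t = List.replicate t.length 1 :=
          List.eq_replicate_length.mpr fun x hx =>
            le_antisymm ((hab.2.2 x hx).trans (by omega)) (hpos x (by simp [hx]))
        have htsum : t.sum = t.length := by
          conv_lhs => rw [ht]
          simp
        have hsum' : a + (2 + t.length) = n := by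
          simp only [List.sum_cons] at hsum
          omega
        have ha : a ∈ Finset.Icc 2 (n - 2) := Finset.mem_Icc.mpr ⟨h1, by omega⟩
        refine Finset.mem_union_left _ (Finset.mem_union_right _ ?_)
        rw [Bset, Finset.mem_image]
        refine ⟨⟨a, ha⟩, Finset.mem_attach _ _, ?_⟩
        apply Nat.Partition.ext
        show a ::ₘ Multiset.replicate (n - a) 1 = p.parts
        rw [← hpl, hb1, hc, ht]
        have : n - a = t.length + 2 := by omega
        rw [this]
        simp only [← Multiset.cons_coe, Multiset.coe_replicate,
          Multiset.replicate_succ]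
      · -- b = 2, a = 2 : p ∈ Cset
        have hb2' : b = 2 := by
          rcases hcase with ha2 | hb1'
          · have := hab.1; omega
          · omega
        have ha2 : a = 2 := by
          rcases hcase with ha2 | hb1' <;> omega
        set s := p.parts with hs
        have hall : ∀ x ∈ s, x = 1 ∨ x = 2 := by
          intro x hx
          rw [← hpl, Multiset.mem_coe] at hx
          have hxpos : 0 < x := hpos x hx
          simp only [List.mem_cons] at hx
          rcases hx with rfl | rfl | rfl | hx
          · omega
          · omega
          · have := hab.2.1; omega
          · have := hab.2.2 x hx; have := hab.2.1; omega
        have hdecomp : s = Multiset.replicate (s.count 2) 2 +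
            Multiset.replicate (s.count 1) 1 := by
          conv_lhs => rw [← Multiset.filter_add_not (fun x => x = 2) s]
          rw [Multiset.filter_eq' s 2]
          congr 1
          rw [Multiset.filter_congr (q := fun x => x = 1)
            (fun x hx => by have := hall x hx; constructor <;> (intro; omega))]
          rw [Multiset.filter_eq' s 1]
        have hj2 : 2 ≤ s.count 2 := by
          rw [← hpl, ha2, hb2', Multiset.coe_count]
          simp [List.count_cons]
        have hsumjk : 2 * s.count 2 + s.count 1 = n := by
          have := p.parts_sum
          rw [← hs] at this
          rw [hdecomp] at this
          simp only [Multiset.sum_add, Multiset.sum_replicate, smul_eq_mul,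
            mul_one, mul_two] at this
          omega
        have hj : s.count 2 ∈ Finset.Icc 2 (n / 2) := Finset.mem_Icc.mpr ⟨hj2, by omega⟩
        refine Finset.mem_union_right _ ?_
        rw [Cset, Finset.mem_image]
        refine ⟨⟨s.count 2, hj⟩, Finset.mem_attach _ _, ?_⟩
        apply Nat.Partition.ext
        show Multiset.replicate (s.count 2) 2 +
          Multiset.replicate (n - 2 * s.count 2) 1 = p.parts
        rw [← hs]
        conv_rhs => rw [hdecomp]
        congr 2
        omega
  · intro hmem
    simp only [Finset.mem_union, Aset, Bset, Cset, Finset.mem_image] at hmem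
    rcases hmem with (⟨x, -, rfl⟩ | ⟨x, -, rfl⟩) | ⟨x, -, rfl⟩
    · obtain ⟨hb1, hb2⟩ := Finset.mem_Icc.mp x.2
      have hsrt : (twoPart n x.1 x.2).parts.sort (· ≥ ·) = [n - x.1, x.1] := by
        apply sort_unique
        · rfl
        · have hba : (x.1 : ℕ) ≤ n - x.1 := by omega
          simp [List.pairwise_cons, hba]
      refine ⟨⟨?_, ?_⟩, ?_⟩
      · show 2 ≤ ((twoPart n x.1 x.2).parts.sort (· ≥ ·)).getD 0 0
        rw [hsrt]; simp; omega
      · show 1 ≤ ((twoPart n x.1 x.2).parts.sort (· ≥ ·)).getD 1 0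
        rw [hsrt]; simpa using hb1
      · rintro ⟨-, -, hc⟩
        rw [show part (twoPart n x.1 x.2) 3
            = ((twoPart n x.1 x.2).parts.sort (· ≥ ·)).getD 2 0 from rfl, hsrt] at hc
        simp at hc
    · obtain ⟨ha1, ha2⟩ := Finset.mem_Icc.mp x.2
      obtain ⟨k, hk⟩ : ∃ k, n - x.1 = k + 2 := ⟨n - x.1 - 2, by omega⟩
      have hsrt : (hookPart n x.1 x.2).parts.sort (· ≥ ·)
          = x.1 :: List.replicate (n - x.1) 1 := by
        apply sort_unique
        · show ((x.1 :: List.replicate (n - x.1) 1 : List ℕ) : Multiset ℕ)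
            = x.1 ::ₘ Multiset.replicate (n - x.1) 1
          rw [← Multiset.cons_coe, Multiset.coe_replicate]
        · rw [List.pairwise_cons]
          exact ⟨fun y hy => by rw [List.eq_of_mem_replicate hy]; omega,
            sorted_replicate_one _⟩
      rw [hk] at hsrt
      simp only [List.replicate_succ] at hsrt
      refine ⟨⟨?_, ?_⟩, ?_⟩
      · show 2 ≤ ((hookPart n x.1 x.2).parts.sort (· ≥ ·)).getD 0 0
        rw [hsrt]; simpa using ha1
      · show 1 ≤ ((hookPart n x.1 x.2).parts.sort (· ≥ ·)).getD 1 0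
        rw [hsrt]; simp
      · rintro ⟨-, hb, -⟩
        rw [show part (hookPart n x.1 x.2) 2
            = ((hookPart n x.1 x.2).parts.sort (· ≥ ·)).getD 1 0 from rfl, hsrt] at hb
        simp at hb
    · obtain ⟨hj1, hj2⟩ := Finset.mem_Icc.mp x.2
      obtain ⟨j', hj'⟩ : ∃ j', (x.1 : ℕ) = j' + 2 := ⟨x.1 - 2, by omega⟩
      have hsrt : (twosPart n x.1 x.2).parts.sort (· ≥ ·)
          = 2 :: 2 :: (List.replicate j' 2 ++ List.replicate (n - 2 * x.1) 1) := by
        apply sort_unique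
        · show ((2 :: 2 :: (List.replicate j' 2 ++ List.replicate (n - 2 * x.1) 1) :
              List ℕ) : Multiset ℕ)
            = Multiset.replicate x.1 2 + Multiset.replicate (n - 2 * x.1) 1
          rw [← Multiset.coe_replicate x.1 2, ← Multiset.coe_replicate (n - 2 * x.1) 1,
            Multiset.coe_add, hj']
          rfl
        · show List.Pairwise (· ≥ ·)
            (List.replicate (j' + 2) 2 ++ List.replicate (n - 2 * x.1) 1)
          rw [List.pairwise_append]
          refine ⟨List.pairwise_replicate.mpr (Or.inr le_rfl),
            sorted_replicate_one _, fun y hy z hz => ?_⟩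
          rw [List.eq_of_mem_replicate hy, List.eq_of_mem_replicate hz]
          omega
      refine ⟨⟨?_, ?_⟩, ?_⟩
      · show 2 ≤ ((twosPart n x.1 x.2).parts.sort (· ≥ ·)).getD 0 0
        rw [hsrt]; simp
      · show 1 ≤ ((twosPart n x.1 x.2).parts.sort (· ≥ ·)).getD 1 0
        rw [hsrt]; simp
      · rintro ⟨ha, -, -⟩
        rw [show part (twosPart n x.1 x.2) 1
            = ((twosPart n x.1 x.2).parts.sort (· ≥ ·)).getD 0 0 from rfl, hsrt] at ha
        simp at ha

end Aux

theorem R_two_formula (n : ℕ) (hn : 4 < n) :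
    R 2 n = if Even n then 2 * n - 4 else 2 * n - 5 := by
  classical
  have hR : R 2 n = (Aset n ∪ Bset n ∪ Cset n).card := by
    unfold R
    congr 1
    ext p
    simp only [Finset.mem_filter, Finset.mem_univ, true_and]
    exact mem_union_iff hn p
  -- cardinalities
  have hinjA : Function.Injective
      (fun x : {b // b ∈ Finset.Icc 1 (n / 2)} => twoPart n x.1 x.2) := by
    intro x y h
    have hparts := congrArg Nat.Partition.parts h
    simp only [twoPart] at hparts
    have hx := Finset.mem_Icc.mp x.2
    have hy := Finset.mem_Icc.mp y.2
    have hm : (x.1 : ℕ) ∈ ({n - y.1, y.1} : Multiset ℕ) := by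
      rw [← hparts]; simp
    apply Subtype.ext
    simp only [Multiset.insert_eq_cons, Multiset.mem_cons, Multiset.mem_singleton] at hm
    rcases hm with h' | h' <;> omega
  have hinjB : Function.Injective
      (fun x : {a // a ∈ Finset.Icc 2 (n - 2)} => hookPart n x.1 x.2) := by
    intro x y h
    have hparts := congrArg (fun q : n.Partition => Multiset.card q.parts) h
    simp only [hookPart, Multiset.card_cons, Multiset.card_replicate] at hparts
    have hx := Finset.mem_Icc.mp x.2
    have hy := Finset.mem_Icc.mp y.2
    apply Subtype.ext
    omega
  have hinjC : Function.Injective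
      (fun x : {j // j ∈ Finset.Icc 2 (n / 2)} => twosPart n x.1 x.2) := by
    intro x y h
    have hparts := congrArg (fun q : n.Partition => Multiset.count 2 q.parts) h
    simp only [twosPart, Multiset.count_add, Multiset.count_replicate] at hparts
    apply Subtype.ext
    simpa using hparts
  have hcardA : (Aset n).card = n / 2 := by
    rw [Aset, Finset.card_image_of_injective _ hinjA, Finset.card_attach, Nat.card_Icc]
    omega
  have hcardB : (Bset n).card = n - 3 := by
    rw [Bset, Finset.card_image_of_injective _ hinjB, Finset.card_attach, Nat.card_Icc]
    omega
  have hcardC : (Cset n).card = n / 2 - 1 := by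
    rw [Cset, Finset.card_image_of_injective _ hinjC, Finset.card_attach, Nat.card_Icc]
    omega
  -- disjointness invariants
  have hAcard : ∀ p ∈ Aset n, Multiset.card p.parts = 2 := by
    intro p hp
    rw [Aset, Finset.mem_image] at hp
    obtain ⟨x, -, rfl⟩ := hp
    simp [twoPart]
  have hBcard : ∀ p ∈ Bset n, 3 ≤ Multiset.card p.parts := by
    intro p hp
    rw [Bset, Finset.mem_image] at hp
    obtain ⟨x, -, rfl⟩ := hp
    have hx := Finset.mem_Icc.mp x.2
    simp only [hookPart, Multiset.card_cons, Multiset.card_replicate]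
    omega
  have hCcard : ∀ p ∈ Cset n, 3 ≤ Multiset.card p.parts := by
    intro p hp
    rw [Cset, Finset.mem_image] at hp
    obtain ⟨x, -, rfl⟩ := hp
    have hx := Finset.mem_Icc.mp x.2
    simp only [twosPart, Multiset.card_add, Multiset.card_replicate]
    omega
  have hBfil : ∀ p ∈ Bset n, (p.parts.filter (fun x => 2 ≤ x)).card = 1 := by
    intro p hp
    rw [Bset, Finset.mem_image] at hp
    obtain ⟨x, -, rfl⟩ := hp
    have hx := Finset.mem_Icc.mp x.2
    simp only [hookPart, Multiset.filter_cons]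
    rw [if_pos hx.1, Multiset.filter_eq_nil.mpr (fun a ha => by
      rw [Multiset.eq_of_mem_replicate ha]; omega)]
    simp
  have hCfil : ∀ p ∈ Cset n, 2 ≤ (p.parts.filter (fun x => 2 ≤ x)).card := by
    intro p hp
    rw [Cset, Finset.mem_image] at hp
    obtain ⟨x, -, rfl⟩ := hp
    have hx := Finset.mem_Icc.mp x.2
    simp only [twosPart, Multiset.filter_add]
    rw [Multiset.filter_eq_self.mpr (fun a ha => by
      rw [Multiset.eq_of_mem_replicate ha])]
    rw [Multiset.filter_eq_nil.mpr (fun a ha => by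
      rw [Multiset.eq_of_mem_replicate ha]; omega)]
    simp only [add_zero, Multiset.card_replicate]
    omega
  have hdisjBC : Disjoint (Bset n) (Cset n) := by
    rw [Finset.disjoint_left]
    intro p hpB hpC
    have := hBfil p hpB
    have := hCfil p hpC
    omega
  have hdisjA : Disjoint (Aset n) (Bset n ∪ Cset n) := by
    rw [Finset.disjoint_left]
    intro p hpA hpBC
    have h2 := hAcard p hpA
    rcases Finset.mem_union.mp hpBC with h | h
    · have := hBcard p h; omega
    · have := hCcard p h; omega
  rw [hR, Finset.union_assoc, Finset.card_union_of_disjoint hdisjA,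
    Finset.card_union_of_disjoint hdisjBC, hcardA, hcardB, hcardC]
  rcases Nat.even_or_odd n with he | ho
  · rw [if_pos he]
    have := Nat.even_iff.mp he
    omega
  · rw [if_neg ((Nat.not_even_iff_odd).mpr ho)]
    have := Nat.odd_iff.mp ho
    omega
end

section
/- For n > 14, R_3(n) satisfies the five-term recurrence R_3(n) = 2R_3(n-1) - R_3(n-2) + R_3(n-3) - 2R_3(n-4) + R_3(n-5). -/
-- count of parts ≥ v
def cnt (v : ℕ) {n : ℕ} (p : n.Partition) : ℕ :=
  Multiset.countP (fun x => v ≤ x) p.parts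

lemma getD_le_head {l : List ℕ} (h : l.Pairwise (· ≥ ·)) {a : ℕ} (ha : ∀ x ∈ l, x ≤ a) (i : ℕ) :
    l.getD i 0 ≤ a := by
  by_cases hi : i < l.length
  · rw [List.getD_eq_getElem l 0 hi]
    exact ha _ (List.getElem_mem hi)
  · rw [List.getD_eq_default l 0 (by omega)]
    exact Nat.zero_le _

lemma getD_iff_countP {l : List ℕ} (h : l.Pairwise (· ≥ ·)) {v : ℕ} (hv : 1 ≤ v) (i : ℕ) :
    v ≤ l.getD i 0 ↔ i < Multiset.countP (fun x => v ≤ x) (l : Multiset ℕ) := by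
  induction l generalizing i with
  | nil => simp; omega
  | cons a t ih =>
    have hst : t.Pairwise (· ≥ ·) := h.of_cons
    have hat : ∀ x ∈ t, x ≤ a := fun x hx => List.rel_of_pairwise_cons h hx
    have hcoe : ((a :: t : List ℕ) : Multiset ℕ) = a ::ₘ (t : Multiset ℕ) := rfl
    rw [hcoe, Multiset.countP_cons]
    by_cases hva : v ≤ a
    · rw [if_pos hva]
      rcases i with _ | i
      · rw [List.getD_cons_zero]
        constructor
        · intro _; omega
        · intro _; exact hva
      · rw [List.getD_cons_succ, ih hst i]; omega
    · have h0 : Multiset.countP (fun x => v ≤ x) (t : Multiset ℕ) = 0 := by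
        rw [Multiset.countP_eq_zero]
        intro x hx
        have : x ≤ a := hat x (by simpa using hx)
        omega
      rw [if_neg hva, h0]
      have hgd : (a :: t).getD i 0 ≤ a := by
        apply getD_le_head h
        intro x hx
        rcases List.mem_cons.mp hx with rfl | hx
        · exact le_refl _
        · exact hat x hx
      constructor
      · intro hle; omega
      · intro hlt; omega

lemma part_ge_iff {n : ℕ} (p : n.Partition) {v i : ℕ} (hv : 1 ≤ v) (hi : 1 ≤ i) :
    v ≤ part p i ↔ i ≤ cnt v p := by
  unfold part cnt
  rw [getD_iff_countP (p.parts.pairwise_sort _) hv, Multiset.sort_eq]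
  omega

lemma part_eq_of_cnt {n : ℕ} (p : n.Partition) {v i : ℕ} (hv : 1 ≤ v) (hi : 1 ≤ i)
    (h1 : i ≤ cnt v p) (h2 : cnt (v + 1) p < i) : part p i = v := by
  have ha := (part_ge_iff p hv hi).mpr h1
  have hb : ¬ (v + 1 ≤ part p i) := by
    rw [part_ge_iff p (by omega) hi]; omega
  omega

lemma countP_succ_split (s : Multiset ℕ) (v : ℕ) :
    s.countP (fun x => v ≤ x) = s.countP (fun x => v + 1 ≤ x) + s.count v := by
  induction s using Multiset.induction with
  | empty => simp
  | cons a s ih =>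
    simp only [Multiset.countP_cons, Multiset.count_cons, ih]
    split_ifs <;> omega

lemma cnt_succ {n : ℕ} (p : n.Partition) (v : ℕ) :
    cnt v p = cnt (v + 1) p + p.parts.count v := countP_succ_split _ _

lemma cnt_one {n : ℕ} (p : n.Partition) : cnt 1 p = Multiset.card p.parts := by
  unfold cnt
  rw [Multiset.countP_eq_card]
  exact fun a ha => p.parts_pos ha

lemma durfee_eq_three_iff {n : ℕ} (hn : 4 ≤ n) (p : n.Partition) :
    durfee p = 3 ↔ ((1 ≤ cnt 3 p ∧ 2 ≤ cnt 2 p ∧ 3 ≤ cnt 1 p) ∧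
      ¬(1 ≤ cnt 4 p ∧ 2 ≤ cnt 3 p ∧ 3 ≤ cnt 2 p ∧ 4 ≤ cnt 1 p)) := by
  have hIcc3 : (Finset.Icc 1 3 : Finset ℕ) = {1, 2, 3} := by decide
  have hIcc4 : (Finset.Icc 1 4 : Finset ℕ) = {1, 2, 3, 4} := by decide
  have hP3 : (∀ i ∈ Finset.Icc 1 3, 3 + 1 ≤ part p i + i) ↔
      (1 ≤ cnt 3 p ∧ 2 ≤ cnt 2 p ∧ 3 ≤ cnt 1 p) := by
    rw [hIcc3]
    simp only [Finset.mem_insert, Finset.mem_singleton, forall_eq_or_imp, forall_eq]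
    rw [show (3 + 1 ≤ part p 1 + 1) ↔ (3 ≤ part p 1) by omega,
      show (3 + 1 ≤ part p 2 + 2) ↔ (2 ≤ part p 2) by omega,
      show (3 + 1 ≤ part p 3 + 3) ↔ (1 ≤ part p 3) by omega,
      part_ge_iff p (by omega) (by omega), part_ge_iff p (by omega) (by omega),
      part_ge_iff p (by omega) (by omega)]
  have hP4 : (∀ i ∈ Finset.Icc 1 4, 4 + 1 ≤ part p i + i) ↔
      (1 ≤ cnt 4 p ∧ 2 ≤ cnt 3 p ∧ 3 ≤ cnt 2 p ∧ 4 ≤ cnt 1 p) := by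
    rw [hIcc4]
    simp only [Finset.mem_insert, Finset.mem_singleton, forall_eq_or_imp, forall_eq]
    rw [show (4 + 1 ≤ part p 1 + 1) ↔ (4 ≤ part p 1) by omega,
      show (4 + 1 ≤ part p 2 + 2) ↔ (3 ≤ part p 2) by omega,
      show (4 + 1 ≤ part p 3 + 3) ↔ (2 ≤ part p 3) by omega,
      show (4 + 1 ≤ part p 4 + 4) ↔ (1 ≤ part p 4) by omega,
      part_ge_iff p (by omega) (by omega), part_ge_iff p (by omega) (by omega),
      part_ge_iff p (by omega) (by omega), part_ge_iff p (by omega) (by omega)]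
  unfold durfee
  have hcongr : ∀ (i1 i2 : DecidablePred fun k => ∀ i ∈ Finset.Icc 1 k, k + 1 ≤ part p i + i),
      @Nat.findGreatest _ i1 n = @Nat.findGreatest _ i2 n := fun i1 i2 => by congr!
  rw [hcongr _ (fun _ => inferInstance), Nat.findGreatest_eq_iff]
  constructor
  · rintro ⟨-, h3, hgt⟩
    refine ⟨hP3.mp (h3 (by omega)), fun hc => ?_⟩
    exact hgt (by omega) hn (hP4.mpr hc)
  · rintro ⟨h3, h4⟩
    refine ⟨by omega, fun _ => hP3.mpr h3, ?_⟩
    intro m hm hmn hPm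
    apply h4
    apply hP4.mp
    intro i hi
    have := hPm i (Finset.mem_Icc.mpr ⟨(Finset.mem_Icc.mp hi).1, le_trans (Finset.mem_Icc.mp hi).2 (by omega)⟩)
    omega

lemma countP_repl {p : ℕ → Prop} [DecidablePred p] (k x : ℕ) :
    (Multiset.replicate k x).countP p = if p x then k else 0 := by
  induction k with
  | zero => simp
  | succ k ih =>
    rw [Multiset.replicate_succ, Multiset.countP_cons, ih]
    split_ifs <;> omega

lemma count_le_countP_four (s : Multiset ℕ) {k : ℕ} (hk : 4 ≤ k) :
    s.count k ≤ s.countP (fun x => 4 ≤ x) := by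
  induction s using Multiset.induction with
  | empty => simp
  | cons a s ih =>
    rw [Multiset.count_cons, Multiset.countP_cons]
    split_ifs <;> omega

lemma recon1 {n : ℕ} (p : n.Partition) (h4 : cnt 4 p = 0) :
    p.parts = Multiset.replicate (p.parts.count 3) 3 + Multiset.replicate (p.parts.count 2) 2 +
      Multiset.replicate (p.parts.count 1) 1 := by
  apply Multiset.ext.mpr
  intro k
  simp only [Multiset.count_add, Multiset.count_replicate]
  have h4' : p.parts.countP (fun x => 4 ≤ x) = 0 := h4
  rcases k with _ | _ | _ | _ | k
  · have h0 : (0 : ℕ) ∉ p.parts := fun h => by have := p.parts_pos h; omega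
    rw [Multiset.count_eq_zero_of_notMem h0]; norm_num
  · norm_num
  · norm_num
  · norm_num
  · have hle := count_le_countP_four p.parts (k := k + 1 + 1 + 1 + 1) (by omega)
    rw [if_neg (by omega), if_neg (by omega), if_neg (by omega)]
    omega

lemma filter_small_eq {n : ℕ} (p : n.Partition) :
    p.parts.filter (fun y => ¬ 3 ≤ y) = Multiset.replicate (p.parts.count 2) 2 +
      Multiset.replicate (p.parts.count 1) 1 := by
  apply Multiset.ext.mpr
  intro k
  simp only [Multiset.count_add, Multiset.count_replicate, Multiset.count_filter]
  rcases k with _ | _ | _ | k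
  · have h0 : (0 : ℕ) ∉ p.parts := fun h => by have := p.parts_pos h; omega
    rw [if_pos (by omega), Multiset.count_eq_zero_of_notMem h0]; norm_num
  · rw [if_pos (by omega)]; norm_num
  · rw [if_pos (by omega)]; norm_num
  · rw [if_neg (by omega), if_neg (by omega), if_neg (by omega)]

lemma recon2 {n : ℕ} (p : n.Partition) (h41 : 1 ≤ cnt 4 p) (h31 : cnt 3 p = 1) :
    ∃ x, 4 ≤ x ∧ p.parts = x ::ₘ (Multiset.replicate (p.parts.count 2) 2 +
      Multiset.replicate (p.parts.count 1) 1) := by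
  have hcard : Multiset.card (p.parts.filter (fun y => 3 ≤ y)) = 1 := by
    rw [← Multiset.countP_eq_card_filter]; exact h31
  obtain ⟨x, hx⟩ := Multiset.card_eq_one.mp hcard
  have hx4 : 4 ≤ x := by
    have h41x : 0 < p.parts.countP (fun x => 4 ≤ x) := h41
    obtain ⟨y, hy, hy4⟩ := Multiset.countP_pos.mp h41x
    have hyf : y ∈ p.parts.filter (fun y => 3 ≤ y) := Multiset.mem_filter.mpr ⟨hy, by omega⟩
    rw [hx, Multiset.mem_singleton] at hyf
    omega
  refine ⟨x, hx4, ?_⟩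
  conv_lhs => rw [← Multiset.filter_add_not (fun y => 3 ≤ y) p.parts]
  rw [hx, filter_small_eq, Multiset.singleton_add]

lemma recon3 {n : ℕ} (p : n.Partition) (h41 : 1 ≤ cnt 4 p) (h32 : 2 ≤ cnt 3 p)
    (h22 : cnt 2 p = 2) :
    ∃ x y, 4 ≤ x ∧ 3 ≤ y ∧ y ≤ x ∧
      p.parts = x ::ₘ y ::ₘ Multiset.replicate (p.parts.count 1) 1 := by
  have hc2 : cnt 2 p = cnt 3 p + p.parts.count 2 := cnt_succ p 2
  have h32' : cnt 3 p = 2 := by omega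
  have hcnt2 : p.parts.count 2 = 0 := by omega
  have hcard : Multiset.card (p.parts.filter (fun y => 3 ≤ y)) = 2 := by
    rw [← Multiset.countP_eq_card_filter]; exact h32'
  obtain ⟨u, v, huv⟩ := Multiset.card_eq_two.mp hcard
  have hu3 : 3 ≤ u := by
    have : u ∈ p.parts.filter (fun y => 3 ≤ y) := by rw [huv]; simp
    exact (Multiset.mem_filter.mp this).2
  have hv3 : 3 ≤ v := by
    have : v ∈ p.parts.filter (fun y => 3 ≤ y) := by rw [huv]; simp
    exact (Multiset.mem_filter.mp this).2
  have hbig : 4 ≤ u ∨ 4 ≤ v := by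
    have h41x : 0 < p.parts.countP (fun x => 4 ≤ x) := h41
    obtain ⟨y, hy, hy4⟩ := Multiset.countP_pos.mp h41x
    have hyf : y ∈ p.parts.filter (fun y => 3 ≤ y) := Multiset.mem_filter.mpr ⟨hy, by omega⟩
    rw [huv] at hyf
    rcases Multiset.mem_cons.mp hyf with rfl | hyf
    · left; exact hy4
    · right; rw [Multiset.mem_singleton] at hyf; omega
  have hparts : p.parts = u ::ₘ v ::ₘ (Multiset.replicate (p.parts.count 2) 2 +
      Multiset.replicate (p.parts.count 1) 1) := by
    conv_lhs => rw [← Multiset.filter_add_not (fun y => 3 ≤ y) p.parts]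
    rw [huv, filter_small_eq]
    rfl
  rw [hcnt2] at hparts
  simp only [Multiset.replicate_zero, zero_add] at hparts
  rcases le_total v u with h | h
  · exact ⟨u, v, by omega, hv3, h, hparts⟩
  · refine ⟨v, u, by omega, hu3, h, ?_⟩
    conv_lhs => rw [hparts]
    rw [Multiset.cons_swap]

lemma recon4 {n : ℕ} (p : n.Partition) (h13 : cnt 1 p = 3) :
    ∃ u v w, p.parts = u ::ₘ v ::ₘ {w} ∧ part p 1 = u ∧ part p 2 = v ∧ part p 3 = w ∧
      w ≤ v ∧ v ≤ u := by
  have hlen : (p.parts.sort (· ≥ ·)).length = 3 := by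
    rw [Multiset.length_sort]
    rw [cnt_one] at h13
    exact h13
  have hsorted := p.parts.pairwise_sort (· ≥ ·)
  have hcoe := p.parts.sort_eq (· ≥ ·)
  obtain ⟨u, v, w, hl⟩ : ∃ u v w, p.parts.sort (· ≥ ·) = [u, v, w] := by
    rcases hls : p.parts.sort (· ≥ ·) with _ | ⟨u, _ | ⟨v, _ | ⟨w, _ | t⟩⟩⟩ <;>
      rw [hls] at hlen <;> simp at hlen
    exact ⟨u, v, w, rfl⟩
  rw [hl] at hsorted hcoe
  refine ⟨u, v, w, ?_, ?_, ?_, ?_, ?_, ?_⟩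
  · rw [← hcoe]; rfl
  · unfold part; rw [hl]; rfl
  · unfold part; rw [hl]; rfl
  · unfold part; rw [hl]; rfl
  · simp [List.pairwise_cons] at hsorted; omega
  · simp [List.pairwise_cons] at hsorted; omega

def DD {n : ℕ} (p : n.Partition) : Prop :=
  (1 ≤ cnt 3 p ∧ 2 ≤ cnt 2 p ∧ 3 ≤ cnt 1 p) ∧
    ¬(1 ≤ cnt 4 p ∧ 2 ≤ cnt 3 p ∧ 3 ≤ cnt 2 p ∧ 4 ≤ cnt 1 p)

instance {n : ℕ} : DecidablePred (DD (n := n)) := fun p => by unfold DD; infer_instance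

lemma part_two_of_shape {n : ℕ} (p : n.Partition) {x y c : ℕ} (hy : 3 ≤ y) (hxy : y ≤ x)
    (hp : p.parts = x ::ₘ y ::ₘ Multiset.replicate c 1) : part p 2 = y := by
  apply part_eq_of_cnt p (by omega) (by omega)
  · show 2 ≤ Multiset.countP _ p.parts
    rw [hp]
    simp only [Multiset.countP_cons, countP_repl]
    split_ifs <;> omega
  · show Multiset.countP _ p.parts < 2
    rw [hp]
    simp only [Multiset.countP_cons, countP_repl]
    split_ifs <;> omega

lemma countP_singleton' {pr : ℕ → Prop} [DecidablePred pr] (z : ℕ) :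
    Multiset.countP pr {z} = if pr z then 1 else 0 := by
  show Multiset.countP pr (z ::ₘ 0) = _
  rw [Multiset.countP_cons, Multiset.countP_zero]
  omega

lemma part_shape3 {n : ℕ} (p : n.Partition) {x y z : ℕ} (hz : 1 ≤ z) (hzy : z ≤ y) (hyx : y ≤ x)
    (hp : p.parts = x ::ₘ y ::ₘ {z}) : part p 2 = y ∧ part p 3 = z := by
  constructor
  · apply part_eq_of_cnt p (by omega) (by omega)
    · show 2 ≤ Multiset.countP _ p.parts
      rw [hp]
      simp only [Multiset.countP_cons, countP_singleton']
      split_ifs <;> omega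
    · show Multiset.countP _ p.parts < 2
      rw [hp]
      simp only [Multiset.countP_cons, countP_singleton']
      split_ifs <;> omega
  · apply part_eq_of_cnt p (by omega) (by omega)
    · show 3 ≤ Multiset.countP _ p.parts
      rw [hp]
      simp only [Multiset.countP_cons, countP_singleton']
      split_ifs <;> omega
    · show Multiset.countP _ p.parts < 3
      rw [hp]
      simp only [Multiset.countP_cons, countP_singleton']
      split_ifs <;> omega

def Q1 (n : ℕ) : Finset (ℕ × ℕ × ℕ) :=
  (Finset.range (n+1) ×ˢ Finset.range (n+1) ×ˢ Finset.range (n+1)).filter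
    (fun t => 1 ≤ t.1 ∧ 2 ≤ t.1 + t.2.1 ∧ 3 ≤ t.1 + t.2.1 + t.2.2 ∧ 3*t.1 + 2*t.2.1 + t.2.2 = n)

lemma mem_Q1 {n a b c : ℕ} : (a, b, c) ∈ Q1 n ↔
    (1 ≤ a ∧ 2 ≤ a + b ∧ 3 ≤ a + b + c ∧ 3*a + 2*b + c = n) := by
  simp only [Q1, Finset.mem_filter, Finset.mem_product, Finset.mem_range]
  omega

def Q2 (n : ℕ) : Finset (ℕ × ℕ) :=
  (Finset.range (n+1) ×ˢ Finset.range (n+1)).filter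
    (fun t => 1 ≤ t.1 ∧ 3 ≤ 1 + t.1 + t.2 ∧ 4 + 2*t.1 + t.2 ≤ n)

lemma mem_Q2 {n b c : ℕ} : (b, c) ∈ Q2 n ↔
    (1 ≤ b ∧ 3 ≤ 1 + b + c ∧ 4 + 2*b + c ≤ n) := by
  simp only [Q2, Finset.mem_filter, Finset.mem_product, Finset.mem_range]
  omega

def Q3 (n : ℕ) : Finset (ℕ × ℕ) :=
  (Finset.range (n+1) ×ˢ Finset.range (n+1)).filter
    (fun t => 3 ≤ t.1 ∧ 1 ≤ t.2 ∧ 2*t.1 + t.2 ≤ n ∧ 4 + t.1 + t.2 ≤ n)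

lemma mem_Q3 {n y c : ℕ} : (y, c) ∈ Q3 n ↔
    (3 ≤ y ∧ 1 ≤ c ∧ 2*y + c ≤ n ∧ 4 + y + c ≤ n) := by
  simp only [Q3, Finset.mem_filter, Finset.mem_product, Finset.mem_range]
  omega

def Q4 (n : ℕ) : Finset (ℕ × ℕ) :=
  (Finset.range (n+1) ×ˢ Finset.range (n+1)).filter
    (fun t => 2 ≤ t.2 ∧ t.2 ≤ t.1 ∧ 3 ≤ t.1 ∧ 2*t.1 + t.2 ≤ n ∧ 4 + t.1 + t.2 ≤ n)

lemma mem_Q4 {n y z : ℕ} : (y, z) ∈ Q4 n ↔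
    (2 ≤ z ∧ z ≤ y ∧ 3 ≤ y ∧ 2*y + z ≤ n ∧ 4 + y + z ≤ n) := by
  simp only [Q4, Finset.mem_filter, Finset.mem_product, Finset.mem_range]
  omega

def mk1 (n : ℕ) (t : ℕ × ℕ × ℕ) (h : t ∈ Q1 n) : n.Partition where
  parts := Multiset.replicate t.1 3 + Multiset.replicate t.2.1 2 + Multiset.replicate t.2.2 1
  parts_pos := by
    intro i hi
    simp only [Multiset.mem_add] at hi
    rcases hi with (hi | hi) | hi <;> rw [Multiset.eq_of_mem_replicate hi] <;> omega
  parts_sum := by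
    obtain ⟨a, b, c⟩ := t
    have := mem_Q1.mp h
    simp only [Multiset.sum_add, Multiset.sum_replicate, smul_eq_mul]
    omega

def mk2 (n : ℕ) (t : ℕ × ℕ) (h : t ∈ Q2 n) : n.Partition where
  parts := (n - 2*t.1 - t.2) ::ₘ (Multiset.replicate t.1 2 + Multiset.replicate t.2 1)
  parts_pos := by
    intro i hi
    obtain ⟨b, c⟩ := t
    have := mem_Q2.mp h
    simp only [Multiset.mem_cons, Multiset.mem_add] at hi
    rcases hi with rfl | (hi | hi)
    · omega
    · rw [Multiset.eq_of_mem_replicate hi]; omega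
    · rw [Multiset.eq_of_mem_replicate hi]; omega
  parts_sum := by
    obtain ⟨b, c⟩ := t
    have := mem_Q2.mp h
    simp only [Multiset.sum_cons, Multiset.sum_add, Multiset.sum_replicate, smul_eq_mul]
    omega

def mk3 (n : ℕ) (t : ℕ × ℕ) (h : t ∈ Q3 n) : n.Partition where
  parts := (n - t.1 - t.2) ::ₘ t.1 ::ₘ Multiset.replicate t.2 1
  parts_pos := by
    intro i hi
    obtain ⟨y, c⟩ := t
    have := mem_Q3.mp h
    simp only [Multiset.mem_cons] at hi
    rcases hi with rfl | (rfl | hi)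
    · omega
    · omega
    · rw [Multiset.eq_of_mem_replicate hi]; omega
  parts_sum := by
    obtain ⟨y, c⟩ := t
    have := mem_Q3.mp h
    simp only [Multiset.sum_cons, Multiset.sum_replicate, smul_eq_mul]
    omega

def mk4 (n : ℕ) (t : ℕ × ℕ) (h : t ∈ Q4 n) : n.Partition where
  parts := (n - t.1 - t.2) ::ₘ t.1 ::ₘ {t.2}
  parts_pos := by
    intro i hi
    obtain ⟨y, z⟩ := t
    have := mem_Q4.mp h
    simp only [Multiset.mem_cons, Multiset.mem_singleton] at hi
    rcases hi with rfl | (rfl | rfl) <;> omega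
  parts_sum := by
    obtain ⟨y, z⟩ := t
    have := mem_Q4.mp h
    simp only [Multiset.sum_cons, Multiset.sum_singleton]
    omega

lemma card_G1 (n : ℕ) :
    ((Finset.univ.filter (fun p : n.Partition => DD p)).filter (fun p => cnt 4 p = 0)).card
      = (Q1 n).card := by
  refine Finset.card_bij' (fun p _ => (p.parts.count 3, p.parts.count 2, p.parts.count 1))
    (fun t ht => mk1 n t ht) ?_ ?_ ?_ ?_
  · intro p hp
    simp only [Finset.mem_filter, Finset.mem_univ, true_and] at hp
    obtain ⟨hDD, h40⟩ := hp
    unfold DD at hDD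
    have e3 : cnt 3 p = cnt 4 p + p.parts.count 3 := cnt_succ p 3
    have e2 : cnt 2 p = cnt 3 p + p.parts.count 2 := cnt_succ p 2
    have e1 : cnt 1 p = cnt 2 p + p.parts.count 1 := cnt_succ p 1
    have h1 := cnt_one p
    have hsum := p.parts_sum
    rw [recon1 p h40] at hsum
    simp only [Multiset.sum_add, Multiset.sum_replicate, smul_eq_mul] at hsum
    rw [mem_Q1]
    omega
  · intro t ht
    simp only [Finset.mem_filter, Finset.mem_univ, true_and]
    obtain ⟨a, b, c⟩ := t
    have h := mem_Q1.mp ht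
    have c4 : cnt 4 (mk1 n (a, b, c) ht) = 0 := by
      simp [cnt, mk1, Multiset.countP_add, countP_repl]
    have c3 : cnt 3 (mk1 n (a, b, c) ht) = a := by
      simp [cnt, mk1, Multiset.countP_add, countP_repl]
    have c2 : cnt 2 (mk1 n (a, b, c) ht) = a + b := by
      simp [cnt, mk1, Multiset.countP_add, countP_repl]
    have c1 : cnt 1 (mk1 n (a, b, c) ht) = a + b + c := by
      simp [cnt, mk1, Multiset.countP_add, countP_repl]
    refine ⟨?_, c4⟩
    unfold DD
    omega
  · intro p hp
    simp only [Finset.mem_filter, Finset.mem_univ, true_and] at hp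
    exact Nat.Partition.ext (recon1 p hp.2).symm
  · intro t ht
    obtain ⟨a, b, c⟩ := t
    simp [mk1, Multiset.count_add, Multiset.count_replicate]

lemma card_G2 (n : ℕ) :
    (((Finset.univ.filter (fun p : n.Partition => DD p)).filter (fun p => ¬ cnt 4 p = 0)).filter
      (fun p => cnt 3 p = 1)).card = (Q2 n).card := by
  refine Finset.card_bij' (fun p _ => (p.parts.count 2, p.parts.count 1))
    (fun t ht => mk2 n t ht) ?_ ?_ ?_ ?_
  · intro p hp
    simp only [Finset.mem_filter, Finset.mem_univ, true_and] at hp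
    obtain ⟨⟨hDD, h40⟩, h31⟩ := hp
    unfold DD at hDD
    have e2 : cnt 2 p = cnt 3 p + p.parts.count 2 := cnt_succ p 2
    have e1 : cnt 1 p = cnt 2 p + p.parts.count 1 := cnt_succ p 1
    obtain ⟨x, hx4, hparts⟩ := recon2 p (by omega) h31
    have hsum := p.parts_sum
    rw [hparts] at hsum
    simp only [Multiset.sum_cons, Multiset.sum_add, Multiset.sum_replicate, smul_eq_mul] at hsum
    rw [mem_Q2]
    omega
  · intro t ht
    simp only [Finset.mem_filter, Finset.mem_univ, true_and]
    obtain ⟨b, c⟩ := t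
    have h := mem_Q2.mp ht
    have hx : 4 ≤ n - 2*b - c := by omega
    have c4 : cnt 4 (mk2 n (b, c) ht) = 1 := by
      simp only [cnt, mk2, Multiset.countP_cons, Multiset.countP_add, countP_repl]
      split_ifs <;> omega
    have c3 : cnt 3 (mk2 n (b, c) ht) = 1 := by
      simp only [cnt, mk2, Multiset.countP_cons, Multiset.countP_add, countP_repl]
      split_ifs <;> omega
    have c2 : cnt 2 (mk2 n (b, c) ht) = 1 + b := by
      simp only [cnt, mk2, Multiset.countP_cons, Multiset.countP_add, countP_repl]
      split_ifs <;> omega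
    have c1 : cnt 1 (mk2 n (b, c) ht) = 1 + b + c := by
      simp only [cnt, mk2, Multiset.countP_cons, Multiset.countP_add, countP_repl]
      split_ifs <;> omega
    refine ⟨⟨?_, by omega⟩, c3⟩
    unfold DD
    omega
  · intro p hp
    simp only [Finset.mem_filter, Finset.mem_univ, true_and] at hp
    obtain ⟨⟨hDD, h40⟩, h31⟩ := hp
    obtain ⟨x, hx4, hparts⟩ := recon2 p (by omega) h31
    have hsum := p.parts_sum
    rw [hparts] at hsum
    simp only [Multiset.sum_cons, Multiset.sum_add, Multiset.sum_replicate, smul_eq_mul] at hsum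
    apply Nat.Partition.ext
    have hxeq : n - 2 * p.parts.count 2 - p.parts.count 1 = x := by omega
    show (n - 2 * p.parts.count 2 - p.parts.count 1) ::ₘ
      (Multiset.replicate (p.parts.count 2) 2 + Multiset.replicate (p.parts.count 1) 1) = p.parts
    rw [hxeq, ← hparts]
  · intro t ht
    obtain ⟨b, c⟩ := t
    have h := mem_Q2.mp ht
    have hx : 4 ≤ n - 2*b - c := by omega
    simp only [mk2, Multiset.count_cons, Multiset.count_add, Multiset.count_replicate]
    simp only [Prod.mk.injEq, true_and, and_true]
    constructor
    · split_ifs <;> omega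
    · split_ifs <;> omega

lemma card_G3 (n : ℕ) :
    ((((Finset.univ.filter (fun p : n.Partition => DD p)).filter (fun p => ¬ cnt 4 p = 0)).filter
      (fun p => ¬ cnt 3 p = 1)).filter (fun p => cnt 2 p = 2)).card = (Q3 n).card := by
  refine Finset.card_bij' (fun p _ => (part p 2, p.parts.count 1))
    (fun t ht => mk3 n t ht) ?_ ?_ ?_ ?_
  · intro p hp
    simp only [Finset.mem_filter, Finset.mem_univ, true_and] at hp
    obtain ⟨⟨⟨hDD, h40⟩, h31⟩, h22⟩ := hp
    unfold DD at hDD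
    have e3 : cnt 3 p = cnt 4 p + p.parts.count 3 := cnt_succ p 3
    have e1 : cnt 1 p = cnt 2 p + p.parts.count 1 := cnt_succ p 1
    obtain ⟨x, y, hx4, hy3, hyx, hparts⟩ := recon3 p (by omega) (by omega) h22
    have hpt := part_two_of_shape p hy3 hyx hparts
    have hsum := p.parts_sum
    rw [hparts] at hsum
    simp only [Multiset.sum_cons, Multiset.sum_replicate, smul_eq_mul] at hsum
    show (part p 2, p.parts.count 1) ∈ Q3 n
    rw [hpt, mem_Q3]
    omega
  · intro t ht
    simp only [Finset.mem_filter, Finset.mem_univ, true_and]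
    obtain ⟨y, c⟩ := t
    have h := mem_Q3.mp ht
    have hx : 4 ≤ n - y - c ∧ y ≤ n - y - c := by omega
    have c4 : 1 ≤ cnt 4 (mk3 n (y, c) ht) := by
      simp only [cnt, mk3, Multiset.countP_cons, countP_repl]
      split_ifs <;> omega
    have c3 : cnt 3 (mk3 n (y, c) ht) = 2 := by
      simp only [cnt, mk3, Multiset.countP_cons, countP_repl]
      split_ifs <;> omega
    have c2 : cnt 2 (mk3 n (y, c) ht) = 2 := by
      simp only [cnt, mk3, Multiset.countP_cons, countP_repl]
      split_ifs <;> omega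
    have c1 : cnt 1 (mk3 n (y, c) ht) = 2 + c := by
      simp only [cnt, mk3, Multiset.countP_cons, countP_repl]
      split_ifs <;> omega
    refine ⟨⟨⟨?_, by omega⟩, by omega⟩, c2⟩
    unfold DD
    omega
  · intro p hp
    simp only [Finset.mem_filter, Finset.mem_univ, true_and] at hp
    obtain ⟨⟨⟨hDD, h40⟩, h31⟩, h22⟩ := hp
    unfold DD at hDD
    have e3 : cnt 3 p = cnt 4 p + p.parts.count 3 := cnt_succ p 3
    obtain ⟨x, y, hx4, hy3, hyx, hparts⟩ := recon3 p (by omega) (by omega) h22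
    have hpt := part_two_of_shape p hy3 hyx hparts
    have hsum := p.parts_sum
    rw [hparts] at hsum
    simp only [Multiset.sum_cons, Multiset.sum_replicate, smul_eq_mul] at hsum
    apply Nat.Partition.ext
    show (n - part p 2 - p.parts.count 1) ::ₘ (part p 2) ::ₘ
      Multiset.replicate (p.parts.count 1) 1 = p.parts
    rw [hpt]
    have hxeq : n - y - p.parts.count 1 = x := by omega
    rw [hxeq, ← hparts]
  · intro t ht
    obtain ⟨y, c⟩ := t
    have h := mem_Q3.mp ht
    have hyx : y ≤ n - y - c := by omega
    have hpt := part_two_of_shape (mk3 n (y, c) ht) (by omega) hyx rfl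
    simp only [Prod.mk.injEq, true_and, and_true]
    refine ⟨hpt, ?_⟩
    show Multiset.count 1 ((n - y - c) ::ₘ y ::ₘ Multiset.replicate c 1) = c
    simp only [Multiset.count_cons, Multiset.count_replicate]
    split_ifs <;> omega

lemma card_G4 (n : ℕ) :
    ((((Finset.univ.filter (fun p : n.Partition => DD p)).filter (fun p => ¬ cnt 4 p = 0)).filter
      (fun p => ¬ cnt 3 p = 1)).filter (fun p => ¬ cnt 2 p = 2)).card = (Q4 n).card := by
  refine Finset.card_bij' (fun p _ => (part p 2, part p 3))
    (fun t ht => mk4 n t ht) ?_ ?_ ?_ ?_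
  · intro p hp
    simp only [Finset.mem_filter, Finset.mem_univ, true_and] at hp
    obtain ⟨⟨⟨hDD, h40⟩, h31⟩, h22⟩ := hp
    unfold DD at hDD
    have e3 : cnt 3 p = cnt 4 p + p.parts.count 3 := cnt_succ p 3
    have e2 : cnt 2 p = cnt 3 p + p.parts.count 2 := cnt_succ p 2
    have e1 : cnt 1 p = cnt 2 p + p.parts.count 1 := cnt_succ p 1
    obtain ⟨u, v, w, hparts, hp1, hp2, hp3, hwv, hvu⟩ := recon4 p (by omega)
    have hcnt : ∀ m : ℕ, cnt m p = (if m ≤ u then 1 else 0) + ((if m ≤ v then 1 else 0) +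
        (if m ≤ w then 1 else 0)) := by
      intro m
      show Multiset.countP _ p.parts = _
      rw [hparts]
      simp only [Multiset.countP_cons, countP_singleton']
      omega
    have h4 := hcnt 4
    have h3 := hcnt 3
    have h2 := hcnt 2
    have hu4 : 4 ≤ u := by split_ifs at h4 <;> omega
    have hv3 : 3 ≤ v := by split_ifs at h3 <;> omega
    have hw2 : 2 ≤ w := by split_ifs at h2 <;> omega
    have hsum := p.parts_sum
    rw [hparts] at hsum
    simp only [Multiset.sum_cons, Multiset.sum_singleton] at hsum
    show (part p 2, part p 3) ∈ Q4 n
    rw [hp2, hp3, mem_Q4]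
    omega
  · intro t ht
    simp only [Finset.mem_filter, Finset.mem_univ, true_and]
    obtain ⟨y, z⟩ := t
    have h := mem_Q4.mp ht
    have hx : 4 ≤ n - y - z ∧ y ≤ n - y - z := by omega
    have hcnt : ∀ m : ℕ, cnt m (mk4 n (y, z) ht) = (if m ≤ n - y - z then 1 else 0) +
        ((if m ≤ y then 1 else 0) + (if m ≤ z then 1 else 0)) := by
      intro m
      simp only [cnt, mk4, Multiset.countP_cons, countP_singleton']
      omega
    have b4 : 1 ≤ cnt 4 (mk4 n (y, z) ht) := by
      have h4 := hcnt 4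
      split_ifs at h4 <;> omega
    have b3 : 2 ≤ cnt 3 (mk4 n (y, z) ht) := by
      have h3 := hcnt 3
      split_ifs at h3 <;> omega
    have b2 : cnt 2 (mk4 n (y, z) ht) = 3 := by
      have h2 := hcnt 2
      split_ifs at h2 <;> omega
    have b1 : cnt 1 (mk4 n (y, z) ht) = 3 := by
      have h1 := hcnt 1
      split_ifs at h1 <;> omega
    refine ⟨⟨⟨?_, by omega⟩, by omega⟩, by omega⟩
    unfold DD
    omega
  · intro p hp
    simp only [Finset.mem_filter, Finset.mem_univ, true_and] at hp
    obtain ⟨⟨⟨hDD, h40⟩, h31⟩, h22⟩ := hp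
    unfold DD at hDD
    have e3 : cnt 3 p = cnt 4 p + p.parts.count 3 := cnt_succ p 3
    have e2 : cnt 2 p = cnt 3 p + p.parts.count 2 := cnt_succ p 2
    have e1 : cnt 1 p = cnt 2 p + p.parts.count 1 := cnt_succ p 1
    obtain ⟨u, v, w, hparts, hp1, hp2, hp3, hwv, hvu⟩ := recon4 p (by omega)
    have hsum := p.parts_sum
    rw [hparts] at hsum
    simp only [Multiset.sum_cons, Multiset.sum_singleton] at hsum
    apply Nat.Partition.ext
    show (n - part p 2 - part p 3) ::ₘ (part p 2) ::ₘ {part p 3} = p.parts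
    rw [hp2, hp3]
    have hxeq : n - v - w = u := by omega
    rw [hxeq, ← hparts]
  · intro t ht
    obtain ⟨y, z⟩ := t
    have h := mem_Q4.mp ht
    have hyx : y ≤ n - y - z := by omega
    have hpt := part_shape3 (mk4 n (y, z) ht) (by omega) (by omega) hyx rfl
    simp only [Prod.mk.injEq, true_and, and_true]
    exact ⟨hpt.1, hpt.2⟩

lemma R_eq (n : ℕ) (hn : 4 ≤ n) :
    R 3 n = (Q1 n).card + (Q2 n).card + (Q3 n).card + (Q4 n).card := by
  have key : ∀ (inst : DecidablePred fun p : n.Partition => durfee p = 3),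
      (@Finset.filter _ _ inst Finset.univ).card =
        (Q1 n).card + (Q2 n).card + (Q3 n).card + (Q4 n).card := by
    intro inst
    have hflt : @Finset.filter _ _ inst Finset.univ =
        Finset.univ.filter (fun p : n.Partition => DD p) := by
      apply Finset.filter_congr
      intro p _
      exact durfee_eq_three_iff hn p
    rw [hflt]
    have s1 := Finset.card_filter_add_card_filter_not
      (s := Finset.univ.filter (fun p : n.Partition => DD p)) (p := fun p => cnt 4 p = 0)
    have s2 := Finset.card_filter_add_card_filter_not
      (s := (Finset.univ.filter (fun p : n.Partition => DD p)).filter (fun p => ¬ cnt 4 p = 0))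
      (p := fun p => cnt 3 p = 1)
    have s3 := Finset.card_filter_add_card_filter_not
      (s := ((Finset.univ.filter (fun p : n.Partition => DD p)).filter
        (fun p => ¬ cnt 4 p = 0)).filter (fun p => ¬ cnt 3 p = 1))
      (p := fun p => cnt 2 p = 2)
    have g1 := card_G1 n
    have g2 := card_G2 n
    have g3 := card_G3 n
    have g4 := card_G4 n
    omega
  exact key _

lemma parity_filter_card (r : ℕ) (hr : r < 2) (M : ℕ) :
    ((Finset.Icc 1 M).filter (fun a => a % 2 = r)).card = (M + r) / 2 := by
  induction M with
  | zero =>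
    rw [show Finset.Icc 1 0 = ∅ by rfl]
    simp
    omega
  | succ M ih =>
    rw [(Finset.insert_Icc_right_eq_Icc_add_one (by omega : 1 ≤ M + 1)).symm, Finset.filter_insert]
    by_cases hpar : (M+1) % 2 = r
    · rw [if_pos hpar, Finset.card_insert_of_notMem (by simp)]
      omega
    · rw [if_neg hpar]
      omega

lemma L1 (n : ℕ) (hn : 8 ≤ n) : (Q1 n).card = (Q1 (n-1)).card + (n/3 + n % 2)/2 := by
  have split := Finset.card_filter_add_card_filter_not (s := Q1 n)
    (p := fun t => 1 ≤ t.2.2 ∧ 4 ≤ t.1 + t.2.1 + t.2.2)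
  have hA : ((Q1 n).filter (fun t => 1 ≤ t.2.2 ∧ 4 ≤ t.1 + t.2.1 + t.2.2)).card
      = (Q1 (n-1)).card := by
    refine Finset.card_nbij' (fun t => (t.1, t.2.1, t.2.2 - 1)) (fun t => (t.1, t.2.1, t.2.2 + 1))
      ?_ ?_ ?_ ?_
    · rintro ⟨a, b, c⟩ ht
      simp only [Finset.mem_coe, Finset.mem_filter, mem_Q1, true_and, and_true] at ht
      simp only [Finset.mem_coe, mem_Q1]
      omega
    · rintro ⟨a, b, c⟩ ht
      simp only [Finset.mem_coe, mem_Q1] at ht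
      simp only [Finset.mem_coe, Finset.mem_filter, mem_Q1, true_and, and_true]
      omega
    · rintro ⟨a, b, c⟩ ht
      simp only [Finset.mem_coe, Finset.mem_filter, mem_Q1, true_and, and_true] at ht
      simp only [Finset.mem_coe, Prod.mk.injEq, true_and, and_true]
      omega
    · rintro ⟨a, b, c⟩ ht
      simp only [Prod.mk.injEq, true_and, and_true]
      omega
  have hC : ((Q1 n).filter (fun t => ¬(1 ≤ t.2.2 ∧ 4 ≤ t.1 + t.2.1 + t.2.2))).card
      = (n/3 + n % 2)/2 := by
    rw [← parity_filter_card (n % 2) (by omega) (n/3)]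
    refine Finset.card_nbij' (fun t => t.1) (fun a => (a, (n - 3*a)/2, 0)) ?_ ?_ ?_ ?_
    · rintro ⟨a, b, c⟩ ht
      simp only [Finset.mem_coe, Finset.mem_filter, mem_Q1, true_and, and_true] at ht
      simp only [Finset.mem_coe, Finset.mem_filter, Finset.mem_Icc]
      omega
    · intro a ha
      simp only [Finset.mem_coe, Finset.mem_filter, Finset.mem_Icc] at ha
      simp only [Finset.mem_coe, Finset.mem_filter, mem_Q1, true_and, and_true]
      omega
    · rintro ⟨a, b, c⟩ ht
      simp only [Finset.mem_coe, Finset.mem_filter, mem_Q1, true_and, and_true] at ht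
      simp only [Finset.mem_coe, Prod.mk.injEq, true_and, and_true]
      omega
    · intro a ha
      rfl
  omega

lemma L2 (n : ℕ) (hn : 8 ≤ n) : (Q2 n).card = (Q2 (n-1)).card + (n-4)/2 := by
  have split := Finset.card_filter_add_card_filter_not (s := Q2 n)
    (p := fun t => 1 ≤ t.2 ∧ 3 ≤ t.1 + t.2)
  have hA : ((Q2 n).filter (fun t => 1 ≤ t.2 ∧ 3 ≤ t.1 + t.2)).card = (Q2 (n-1)).card := by
    refine Finset.card_nbij' (fun t => (t.1, t.2 - 1)) (fun t => (t.1, t.2 + 1)) ?_ ?_ ?_ ?_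
    · rintro ⟨b, c⟩ ht
      simp only [Finset.mem_coe, Finset.mem_filter, mem_Q2, true_and, and_true] at ht
      simp only [Finset.mem_coe, mem_Q2]
      omega
    · rintro ⟨b, c⟩ ht
      simp only [Finset.mem_coe, mem_Q2] at ht
      simp only [Finset.mem_coe, Finset.mem_filter, mem_Q2, true_and, and_true]
      omega
    · rintro ⟨b, c⟩ ht
      simp only [Finset.mem_coe, Finset.mem_filter, mem_Q2, true_and, and_true] at ht
      simp only [Finset.mem_coe, Prod.mk.injEq, true_and, and_true]
      omega
    · rintro ⟨b, c⟩ ht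
      simp only [Prod.mk.injEq, true_and, and_true]
      omega
  have split2 := Finset.card_filter_add_card_filter_not
    (s := (Q2 n).filter (fun t => ¬(1 ≤ t.2 ∧ 3 ≤ t.1 + t.2))) (p := fun t => t.2 = 0)
  have hP1 : (((Q2 n).filter (fun t => ¬(1 ≤ t.2 ∧ 3 ≤ t.1 + t.2))).filter
      (fun t => t.2 = 0)).card = (n-4)/2 - 1 := by
    have hcard : (Finset.Icc 2 ((n-4)/2)).card = (n-4)/2 - 1 := by
      rw [Nat.card_Icc]; omega
    rw [← hcard]
    refine Finset.card_nbij' (fun t => t.1) (fun b => (b, 0)) ?_ ?_ ?_ ?_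
    · rintro ⟨b, c⟩ ht
      simp only [Finset.mem_coe, Finset.mem_filter, mem_Q2, true_and, and_true] at ht
      simp only [Finset.mem_coe, Finset.mem_Icc]
      omega
    · intro b hb
      simp only [Finset.mem_coe, Finset.mem_Icc] at hb
      simp only [Finset.mem_coe, Finset.mem_filter, mem_Q2, true_and, and_true]
      omega
    · rintro ⟨b, c⟩ ht
      simp only [Finset.mem_coe, Finset.mem_filter, mem_Q2, true_and, and_true] at ht
      simp only [Finset.mem_coe, Prod.mk.injEq, true_and, and_true]
      omega
    · intro b hb
      rfl
  have hP2 : (((Q2 n).filter (fun t => ¬(1 ≤ t.2 ∧ 3 ≤ t.1 + t.2))).filter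
      (fun t => ¬ t.2 = 0)) = {(1, 1)} := by
    apply Finset.ext
    rintro ⟨b, c⟩
    simp only [Finset.mem_filter, mem_Q2, Finset.mem_singleton, Prod.mk.injEq]
    omega
  rw [hP2] at split2
  rw [Finset.card_singleton] at split2
  omega

lemma L3 (n : ℕ) (hn : 9 ≤ n) : (Q3 n).card = (Q3 (n-1)).card + ((n-1)/2 - 2) := by
  have split := Finset.card_filter_add_card_filter_not (s := Q3 n)
    (p := fun t => 2 ≤ t.2)
  have hA : ((Q3 n).filter (fun t => 2 ≤ t.2)).card = (Q3 (n-1)).card := by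
    refine Finset.card_nbij' (fun t => (t.1, t.2 - 1)) (fun t => (t.1, t.2 + 1)) ?_ ?_ ?_ ?_
    · rintro ⟨y, c⟩ ht
      simp only [Finset.mem_coe, Finset.mem_filter, mem_Q3, true_and, and_true] at ht
      simp only [Finset.mem_coe, mem_Q3]
      omega
    · rintro ⟨y, c⟩ ht
      simp only [Finset.mem_coe, mem_Q3] at ht
      simp only [Finset.mem_coe, Finset.mem_filter, mem_Q3, true_and, and_true]
      omega
    · rintro ⟨y, c⟩ ht
      simp only [Finset.mem_coe, Finset.mem_filter, mem_Q3, true_and, and_true] at ht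
      simp only [Finset.mem_coe, Prod.mk.injEq, true_and, and_true]
      omega
    · rintro ⟨y, c⟩ ht
      simp only [Prod.mk.injEq, true_and, and_true]
      omega
  have hC : ((Q3 n).filter (fun t => ¬ 2 ≤ t.2)).card = (n-1)/2 - 2 := by
    have hcard : (Finset.Icc 3 ((n-1)/2)).card = (n-1)/2 - 2 := by
      rw [Nat.card_Icc]; omega
    rw [← hcard]
    refine Finset.card_nbij' (fun t => t.1) (fun y => (y, 1)) ?_ ?_ ?_ ?_
    · rintro ⟨y, c⟩ ht
      simp only [Finset.mem_coe, Finset.mem_filter, mem_Q3, true_and, and_true] at ht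
      simp only [Finset.mem_coe, Finset.mem_Icc]
      omega
    · intro y hy
      simp only [Finset.mem_coe, Finset.mem_Icc] at hy
      simp only [Finset.mem_coe, Finset.mem_filter, mem_Q3, true_and, and_true]
      omega
    · rintro ⟨y, c⟩ ht
      simp only [Finset.mem_coe, Finset.mem_filter, mem_Q3, true_and, and_true] at ht
      simp only [Finset.mem_coe, Prod.mk.injEq, true_and, and_true]
      omega
    · intro y hy
      rfl
  omega

lemma L4 (n : ℕ) (hn : 13 ≤ n) : (Q4 n).card = (Q4 (n-3)).card + ((n-2)/2 - 1) := by
  have split := Finset.card_filter_add_card_filter_not (s := Q4 n)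
    (p := fun t => 3 ≤ t.2 ∧ 4 ≤ t.1 ∧ 4 + t.1 + t.2 + 1 ≤ n)
  have hA : ((Q4 n).filter (fun t => 3 ≤ t.2 ∧ 4 ≤ t.1 ∧ 4 + t.1 + t.2 + 1 ≤ n)).card
      = (Q4 (n-3)).card := by
    refine Finset.card_nbij' (fun t => (t.1 - 1, t.2 - 1)) (fun t => (t.1 + 1, t.2 + 1)) ?_ ?_ ?_ ?_
    · rintro ⟨y, z⟩ ht
      simp only [Finset.mem_coe, Finset.mem_filter, mem_Q4, true_and, and_true] at ht
      simp only [Finset.mem_coe, mem_Q4]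
      omega
    · rintro ⟨y, z⟩ ht
      simp only [Finset.mem_coe, mem_Q4] at ht
      simp only [Finset.mem_coe, Finset.mem_filter, mem_Q4, true_and, and_true]
      omega
    · rintro ⟨y, z⟩ ht
      simp only [Finset.mem_coe, Finset.mem_filter, mem_Q4, true_and, and_true] at ht
      simp only [Finset.mem_coe, Prod.mk.injEq, true_and, and_true]
      omega
    · rintro ⟨y, z⟩ ht
      simp only [Prod.mk.injEq, true_and, and_true]
      omega
  have split2 := Finset.card_filter_add_card_filter_not
    (s := (Q4 n).filter (fun t => ¬(3 ≤ t.2 ∧ 4 ≤ t.1 ∧ 4 + t.1 + t.2 + 1 ≤ n)))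
    (p := fun t => t.2 = 2)
  have hP1 : (((Q4 n).filter (fun t => ¬(3 ≤ t.2 ∧ 4 ≤ t.1 ∧ 4 + t.1 + t.2 + 1 ≤ n))).filter
      (fun t => t.2 = 2)).card = (n-2)/2 - 2 := by
    have hcard : (Finset.Icc 3 ((n-2)/2)).card = (n-2)/2 - 2 := by
      rw [Nat.card_Icc]; omega
    rw [← hcard]
    refine Finset.card_nbij' (fun t => t.1) (fun y => (y, 2)) ?_ ?_ ?_ ?_
    · rintro ⟨y, z⟩ ht
      simp only [Finset.mem_coe, Finset.mem_filter, mem_Q4, true_and, and_true] at ht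
      simp only [Finset.mem_coe, Finset.mem_Icc]
      omega
    · intro y hy
      simp only [Finset.mem_coe, Finset.mem_Icc] at hy
      simp only [Finset.mem_coe, Finset.mem_filter, mem_Q4, true_and, and_true]
      omega
    · rintro ⟨y, z⟩ ht
      simp only [Finset.mem_coe, Finset.mem_filter, mem_Q4, true_and, and_true] at ht
      simp only [Finset.mem_coe, Prod.mk.injEq, true_and, and_true]
      omega
    · intro y hy
      rfl
  have hP2 : (((Q4 n).filter (fun t => ¬(3 ≤ t.2 ∧ 4 ≤ t.1 ∧ 4 + t.1 + t.2 + 1 ≤ n))).filter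
      (fun t => ¬ t.2 = 2)) = {(3, 3)} := by
    apply Finset.ext
    rintro ⟨y, z⟩
    simp only [Finset.mem_filter, mem_Q4, Finset.mem_singleton, Prod.mk.injEq]
    omega
  rw [hP2, Finset.card_singleton] at split2
  omega


set_option maxHeartbeats 2000000 in
theorem R_three_recurrence (n : ℕ) (hn : 14 < n) :
    (R 3 n : ℤ) = 2 * R 3 (n - 1) - R 3 (n - 2) + R 3 (n - 3) - 2 * R 3 (n - 4)
      + R 3 (n - 5) := by
  have r0 := R_eq n (by omega)
  have r1 := R_eq (n-1) (by omega)
  have r2 := R_eq (n-2) (by omega)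
  have r3 := R_eq (n-3) (by omega)
  have r4 := R_eq (n-4) (by omega)
  have r5 := R_eq (n-5) (by omega)
  have a1 := L1 n (by omega)
  have a1b := L1 (n-1) (by omega)
  rw [show n-1-1 = n-2 by omega] at a1b
  have a1c := L1 (n-3) (by omega)
  rw [show n-3-1 = n-4 by omega] at a1c
  have a1d := L1 (n-4) (by omega)
  rw [show n-4-1 = n-5 by omega] at a1d
  have a2 := L2 n (by omega)
  have a2b := L2 (n-1) (by omega)
  rw [show n-1-1 = n-2 by omega] at a2b
  have a2c := L2 (n-3) (by omega)
  rw [show n-3-1 = n-4 by omega] at a2c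
  have a2d := L2 (n-4) (by omega)
  rw [show n-4-1 = n-5 by omega] at a2d
  have a3 := L3 n (by omega)
  have a3b := L3 (n-1) (by omega)
  rw [show n-1-1 = n-2 by omega] at a3b
  have a3c := L3 (n-3) (by omega)
  rw [show n-3-1 = n-4 by omega] at a3c
  have a3d := L3 (n-4) (by omega)
  rw [show n-4-1 = n-5 by omega] at a3d
  have a4 := L4 n (by omega)
  have a4b := L4 (n-1) (by omega)
  rw [show n-1-3 = n-4 by omega] at a4b
  have a4c := L4 (n-2) (by omega)
  rw [show n-2-3 = n-5 by omega] at a4c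
  omega
end

section
/- For n > 16, R_4(n) is even if n ≡ 4 or 6 (mod 8), and odd if n ≡ 0, 1, 2, 3, 5, or 7 (mod 8). In particular, R_4(n) is odd for all odd n > 16. -/
namespace Parity4


/-- number of parts of `p` that are `≥ j` (column length `j` of the diagram). -/
def Np {n : ℕ} (p : n.Partition) (j : ℕ) : ℕ :=
  Multiset.card (p.parts.filter (fun x => j ≤ x))

lemma list_dual (l : List ℕ) (hl : l.Pairwise (· ≥ ·)) {j : ℕ} (hj : 1 ≤ j) :
    ∀ k : ℕ, j ≤ l.getD k 0 ↔ k < l.countP (fun x => j ≤ x) := by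
  induction l with
  | nil => intro k; simp; omega
  | cons a t ih =>
    rw [List.pairwise_cons] at hl
    obtain ⟨ha, ht⟩ := hl
    intro k
    have hC : (a :: t).countP (fun x => j ≤ x) =
        t.countP (fun x => j ≤ x) + (if j ≤ a then 1 else 0) := by
      rw [List.countP_cons]; simp
    cases k with
    | zero =>
      simp only [List.getD_cons_zero, hC]
      by_cases hja : j ≤ a
      · simp [hja]
      · simp only [hja, if_false]
        have : t.countP (fun x => j ≤ x) = 0 := by
          rw [List.countP_eq_zero]
          intro x hx
          have := ha x hx
          simp only [decide_eq_true_eq]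
          omega
        simp [this, hja]
    | succ k =>
      simp only [List.getD_cons_succ, hC]
      rw [ih ht k]
      by_cases hja : j ≤ a
      · simp [hja]
      · have : t.countP (fun x => j ≤ x) = 0 := by
          rw [List.countP_eq_zero]
          intro x hx
          have := ha x hx
          simp only [decide_eq_true_eq]
          omega
        simp [this, hja]

lemma part_dual {n : ℕ} (p : n.Partition) {i j : ℕ} (hi : 1 ≤ i) (hj : 1 ≤ j) :
    j ≤ part p i ↔ i ≤ Np p j := by
  have h := list_dual (p.parts.sort (· ≥ ·)) (p.parts.pairwise_sort _) hj (i - 1)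
  rw [part]
  rw [h]
  have hc : (p.parts.sort (· ≥ ·)).countP (fun x => j ≤ x)
      = Multiset.countP (fun x => j ≤ x) p.parts := by
    rw [← Multiset.coe_countP, Multiset.sort_eq]
  rw [hc, Np, Multiset.countP_eq_card_filter]
  omega




lemma Np_anti {n : ℕ} (p : n.Partition) {j j' : ℕ} (h : j ≤ j') : Np p j' ≤ Np p j := by
  apply Multiset.card_le_card
  apply Multiset.monotone_filter_right
  intro x hx
  omega

lemma Np_one {n : ℕ} (p : n.Partition) : Np p 1 = Multiset.card p.parts := by
  rw [Np, Multiset.filter_eq_self.2]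
  intro x hx
  exact p.parts_pos hx

lemma parts_le_n {n : ℕ} (p : n.Partition) {x : ℕ} (hx : x ∈ p.parts) : x ≤ n := by
  have := Multiset.single_le_sum (fun y _ => Nat.zero_le y) x hx
  rw [p.parts_sum] at this
  exact this

lemma Np_le_n {n : ℕ} (p : n.Partition) (j : ℕ) : Np p j ≤ n := by
  calc Np p j ≤ Multiset.card p.parts := Multiset.card_le_card (Multiset.filter_le _ _)
  _ ≤ p.parts.sum := by
        have := Multiset.card_nsmul_le_sum (s := p.parts) (a := 1) fun x hx => p.parts_pos hx
        simpa using this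
  _ = n := p.parts_sum

lemma Np_eq_zero {n : ℕ} (p : n.Partition) {j : ℕ} (hj : n < j) : Np p j = 0 := by
  rw [Np, Multiset.card_eq_zero, Multiset.filter_eq_nil]
  intro x hx
  have := parts_le_n p hx
  omega

lemma count_add_Np {n : ℕ} (p : n.Partition) (v : ℕ) :
    p.parts.count v + Np p (v + 1) = Np p v := by
  have key := Multiset.filter_add_filter (fun x => v = x) (fun x => v + 1 ≤ x) p.parts
  have h1 : p.parts.filter (fun x => v = x ∨ v + 1 ≤ x) = p.parts.filter (fun x => v ≤ x) := by
    apply Multiset.filter_congr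
    intro x _
    constructor
    · intro h; omega
    · intro h; omega
  have h2 : p.parts.filter (fun x => v = x ∧ v + 1 ≤ x) = 0 := by
    rw [Multiset.filter_eq_nil]
    intro x _ h
    omega
  rw [h1, h2] at key
  have := congrArg Multiset.card key
  rw [Multiset.card_add, Multiset.card_add, Multiset.card_zero] at this
  rw [Multiset.count_eq_card_filter_eq, Np, Np]
  omega

lemma ext_by_Np {n : ℕ} {p q : n.Partition} (h : ∀ j, 1 ≤ j → Np p j = Np q j) : p = q := by
  ext1
  ext v
  rcases Nat.eq_zero_or_pos v with hv | hv
  · subst hv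
    rw [Multiset.count_eq_zero_of_notMem, Multiset.count_eq_zero_of_notMem]
    · intro hm; exact absurd (q.parts_pos hm) (by omega)
    · intro hm; exact absurd (p.parts_pos hm) (by omega)
  · have h1 := count_add_Np p v
    have h2 := count_add_Np q v
    have e1 := h v hv
    have e2 := h (v + 1) (by omega)
    omega






lemma sum_cols (nn : ℕ) (s : Multiset ℕ) (hs : ∀ x ∈ s, x ≤ nn) :
    ∑ j ∈ Finset.range nn, Multiset.card (s.filter (fun x => j + 1 ≤ x)) = s.sum := by
  induction s using Multiset.induction_on with
  | empty => simp
  | cons a s ih =>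
    have ha := hs a (Multiset.mem_cons_self a s)
    rw [Multiset.sum_cons, ← ih (fun x hx => hs x (Multiset.mem_cons_of_mem hx))]
    have hstep : ∀ j : ℕ, Multiset.card ((a ::ₘ s).filter (fun x => j + 1 ≤ x)) =
        (if j + 1 ≤ a then 1 else 0) + Multiset.card (s.filter (fun x => j + 1 ≤ x)) := by
      intro j
      rw [Multiset.filter_cons, Multiset.card_add]
      congr 1
      split <;> simp
    simp_rw [hstep]
    rw [Finset.sum_add_distrib]
    congr 1
    rw [← Finset.card_filter]
    have : (Finset.range nn).filter (fun j => j + 1 ≤ a) = Finset.range a := by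
      ext x
      simp only [Finset.mem_filter, Finset.mem_range]
      omega
    rw [this, Finset.card_range]

/-- The conjugate partition. -/
def conj {n : ℕ} (p : n.Partition) : n.Partition where
  parts := ((Multiset.range n).map (fun j => Np p (j + 1))).filter (fun x => 0 < x)
  parts_pos := fun hx => Multiset.of_mem_filter hx
  parts_sum := by
    have h1 : (((Multiset.range n).map (fun j => Np p (j + 1))).filter (fun x => 0 < x)).sum
        = ((Multiset.range n).map (fun j => Np p (j + 1))).sum := by
      set t := (Multiset.range n).map (fun j => Np p (j + 1)) with ht
      have hsplit := Multiset.filter_add_not (fun x => 0 < x) t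
      have h0 : (t.filter (fun x => ¬ 0 < x)).sum = 0 := by
        apply Multiset.sum_eq_zero
        intro x hx
        have := Multiset.of_mem_filter hx
        omega
      calc (t.filter (fun x => 0 < x)).sum
          = (t.filter (fun x => 0 < x)).sum + (t.filter (fun x => ¬ 0 < x)).sum := by
            rw [h0]; ring
        _ = t.sum := by rw [← Multiset.sum_add, hsplit]
    rw [h1]
    have h2 : ((Multiset.range n).map (fun j => Np p (j + 1))).sum
        = ∑ j ∈ Finset.range n, Np p (j + 1) := by
      rw [Finset.sum_eq_multiset_sum, Finset.range_val]
    rw [h2]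
    have := sum_cols n p.parts (fun x hx => parts_le_n p hx)
    rw [p.parts_sum] at this
    exact this

lemma le_card_filter_range_iff {nn : ℕ} {q : ℕ → Prop} [DecidablePred q]
    (hdc : ∀ k j : ℕ, k ≤ j → q j → q k) {i : ℕ} (hi : 1 ≤ i) :
    i ≤ ((Finset.range nn).filter q).card ↔ (i - 1 < nn ∧ q (i - 1)) := by
  constructor
  · intro h
    by_contra hcon
    rcases not_and_or.1 hcon with hlt | hq
    · have hsub : (Finset.range nn).filter q ⊆ Finset.range nn := Finset.filter_subset _ _
      have := Finset.card_le_card hsub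
      rw [Finset.card_range] at this
      omega
    · have hsub : (Finset.range nn).filter q ⊆ Finset.range (i - 1) := by
        intro x hx
        rw [Finset.mem_filter, Finset.mem_range] at hx
        rw [Finset.mem_range]
        by_contra hxi
        exact hq (hdc (i - 1) x (by omega) hx.2)
      have := Finset.card_le_card hsub
      rw [Finset.card_range] at this
      omega
  · rintro ⟨h1, h2⟩
    have hsub : Finset.range i ⊆ (Finset.range nn).filter q := by
      intro x hx
      rw [Finset.mem_range] at hx
      rw [Finset.mem_filter, Finset.mem_range]
      exact ⟨by omega, hdc x (i - 1) (by omega) h2⟩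
    have := Finset.card_le_card hsub
    rw [Finset.card_range] at this
    exact this

lemma Np_conj_iff {n : ℕ} (p : n.Partition) {m j : ℕ} (hm : 1 ≤ m) (hj : 1 ≤ j) :
    j ≤ Np (conj p) m ↔ m ≤ Np p j := by
  have hNp : Np (conj p) m =
      ((Finset.range n).filter (fun j' => m ≤ Np p (j' + 1))).card := by
    rw [Np, conj]
    simp only
    rw [Multiset.filter_filter]
    have hcongr : (((Multiset.range n).map (fun j => Np p (j + 1))).filter
        (fun x => m ≤ x ∧ 0 < x)) = (((Multiset.range n).map (fun j => Np p (j + 1))).filter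
        (fun x => m ≤ x)) := by
      apply Multiset.filter_congr
      intro x _
      constructor
      · intro h; exact h.1
      · intro h; exact ⟨h, by omega⟩
    rw [hcongr, ← Multiset.countP_eq_card_filter, Multiset.countP_map]
    have : (Finset.filter (fun j' => m ≤ Np p (j' + 1)) (Finset.range n)).card
        = Multiset.card (Multiset.filter (fun a => m ≤ Np p (a + 1)) (Multiset.range n)) := by
      rw [Finset.card, Finset.filter_val, Finset.range_val]
    rw [this]
  rw [hNp]
  rw [le_card_filter_range_iff (fun k j' hkj hqj => le_trans hqj
      (by
        apply Multiset.card_le_card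
        apply Multiset.monotone_filter_right
        intro x hx
        omega)) hj]
  have hj1 : j - 1 + 1 = j := by omega
  rw [hj1]
  constructor
  · intro h; exact h.2
  · intro h
    refine ⟨?_, h⟩
    by_contra hcon
    have : n < j := by omega
    rw [Np_eq_zero p this] at h
    omega


lemma nat_le_ext {x y : ℕ} (h : ∀ m, 1 ≤ m → (m ≤ x ↔ m ≤ y)) : x = y := by
  rcases Nat.eq_zero_or_pos x with hx | hx
  · rcases Nat.eq_zero_or_pos y with hy | hy
    · omega
    · have := (h y hy).2 le_rfl; omega
  · have h1 := (h x hx).1 le_rfl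
    rcases Nat.eq_zero_or_pos y with hy | hy
    · omega
    · have h2 := (h y hy).2 le_rfl; omega

lemma part_conj {n : ℕ} (p : n.Partition) {j : ℕ} (hj : 1 ≤ j) :
    part (conj p) j = Np p j :=
  nat_le_ext fun m hm => (part_dual (conj p) hj hm).trans (Np_conj_iff p hm hj)

lemma Np_conj_eq {n : ℕ} (p : n.Partition) {m : ℕ} (hm : 1 ≤ m) :
    Np (conj p) m = part p m :=
  nat_le_ext fun j hj => (Np_conj_iff p hm hj).trans (part_dual p hm hj).symm

lemma conj_conj {n : ℕ} (p : n.Partition) : conj (conj p) = p := by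
  apply ext_by_Np
  intro j hj
  rw [Np_conj_eq (conj p) hj, part_conj p hj]

lemma part_eq_Np_of_selfconj {n : ℕ} {p : n.Partition} (h : conj p = p) {j : ℕ} (hj : 1 ≤ j) :
    part p j = Np p j := by
  conv_lhs => rw [← h]
  exact part_conj p hj

lemma C_iff {n : ℕ} (p : n.Partition) (k : ℕ) :
    (∀ i ∈ Finset.Icc 1 k, k + 1 ≤ part p i + i) ↔
      (∀ i ∈ Finset.Icc 1 k, i ≤ Np p (k + 1 - i)) := by
  constructor <;> intro h i hi <;> have hm := Finset.mem_Icc.1 hi <;>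
    have h2 := h i hi
  · rw [← part_dual p (by omega) (by omega)]
    omega
  · rw [← part_dual p (by omega) (by omega)] at h2
    omega

lemma C_sym {n : ℕ} (p : n.Partition) (k : ℕ) :
    (∀ i ∈ Finset.Icc 1 k, i ≤ Np p (k + 1 - i)) ↔
      (∀ i ∈ Finset.Icc 1 k, k + 1 - i ≤ Np p i) := by
  constructor <;> intro h i hi <;> have hm := Finset.mem_Icc.1 hi
  · have h2 := h (k + 1 - i) (Finset.mem_Icc.2 (by omega))
    have he : k + 1 - (k + 1 - i) = i := by omega
    rw [he] at h2
    exact h2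
  · have h2 := h (k + 1 - i) (Finset.mem_Icc.2 (by omega))
    have he : k + 1 - (k + 1 - i) = i := by omega
    rw [he] at h2
    exact h2

lemma findGreatest_congr {P Q : ℕ → Prop} [DecidablePred P] [DecidablePred Q]
    (h : ∀ k, P k ↔ Q k) : ∀ m : ℕ, Nat.findGreatest P m = Nat.findGreatest Q m := by
  intro m
  induction m with
  | zero => rfl
  | succ m ih =>
    rw [Nat.findGreatest_succ, Nat.findGreatest_succ, if_congr (h (m + 1)) rfl ih]

lemma C_conj_iff {n : ℕ} (p : n.Partition) (k : ℕ) :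
    (∀ i ∈ Finset.Icc 1 k, k + 1 ≤ part (conj p) i + i) ↔
      (∀ i ∈ Finset.Icc 1 k, k + 1 ≤ part p i + i) := by
  rw [C_iff, C_sym, C_iff p k]
  constructor <;> intro h i hi <;> have hm := Finset.mem_Icc.1 hi <;>
    have h2 := h i hi
  · rwa [Np_conj_eq p (by omega), part_dual p (by omega) (by omega)] at h2
  · rwa [Np_conj_eq p (by omega), part_dual p (by omega) (by omega)]

lemma durfee_conj {n : ℕ} (p : n.Partition) : durfee (conj p) = durfee p := by
  unfold durfee
  have h := @findGreatest_congr
    (fun k => ∀ i ∈ Finset.Icc 1 k, k + 1 ≤ part (conj p) i + i)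
    (fun k => ∀ i ∈ Finset.Icc 1 k, k + 1 ≤ part p i + i)
    (fun _ => Classical.propDecidable _) (fun _ => Classical.propDecidable _)
    (C_conj_iff p) n
  convert h using 2 <;> exact Subsingleton.elim _ _

lemma card_modEq_filter_fixed {α : Type*} [DecidableEq α] (f : α → α) :
    ∀ s : Finset α, (∀ a ∈ s, f a ∈ s) → (∀ a ∈ s, f (f a) = a) →
    s.card % 2 = (s.filter (fun a => f a = a)).card % 2 := by
  intro s
  induction s using Finset.strongInduction with
  | _ s ih =>
    intro hmap hinv
    by_cases hall : ∀ a ∈ s, f a = a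
    · rw [Finset.filter_true_of_mem hall]
    · push_neg at hall
      obtain ⟨a, ha, hfa⟩ := hall
      have hfas : f a ∈ s := hmap a ha
      have hffa : f (f a) = a := hinv a ha
      set t := (s.erase a).erase (f a) with htdef
      have hfae : f a ∈ s.erase a := Finset.mem_erase.2 ⟨hfa, hfas⟩
      have htsub : t ⊂ s := by
        apply Finset.ssubset_of_subset_of_ssubset (Finset.erase_subset _ _)
        exact Finset.erase_ssubset ha
      have hmem : ∀ b, b ∈ t ↔ b ∈ s ∧ b ≠ a ∧ b ≠ f a := by
        intro b
        simp only [htdef, Finset.mem_erase]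
        tauto
      have htmap : ∀ b ∈ t, f b ∈ t := by
        intro b hb
        rw [hmem] at hb ⊢
        obtain ⟨hbs, hba, hbfa⟩ := hb
        have hffb : f (f b) = b := hinv b hbs
        refine ⟨hmap b hbs, ?_, ?_⟩
        · intro hc
          rw [hc] at hffb
          exact hbfa hffb.symm
        · intro hc
          rw [hc] at hffb
          rw [hffa] at hffb
          exact hba hffb.symm
      have htinv : ∀ b ∈ t, f (f b) = b := fun b hb => hinv b ((hmem b).1 hb).1
      have hfix : s.filter (fun x => f x = x) = t.filter (fun x => f x = x) := by
        ext x
        simp only [Finset.mem_filter, hmem]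
        constructor
        · rintro ⟨hxs, hfx⟩
          refine ⟨⟨hxs, ?_, ?_⟩, hfx⟩
          · rintro rfl; exact hfa hfx
          · rintro rfl; rw [hffa] at hfx; exact hfa hfx.symm
        · rintro ⟨⟨hxs, _, _⟩, hfx⟩
          exact ⟨hxs, hfx⟩
      have hpair : ({a, f a} : Finset α) ⊆ s := by
        intro x hx
        rcases Finset.mem_insert.1 hx with rfl | hx
        · exact ha
        · rw [Finset.mem_singleton.1 hx]; exact hfas
      have hcard2 : 2 ≤ s.card := by
        have := Finset.card_le_card hpair
        rwa [Finset.card_pair (Ne.symm hfa)] at this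
      have hcard : t.card + 2 = s.card := by
        rw [htdef, Finset.card_erase_of_mem hfae, Finset.card_erase_of_mem ha]
        omega
      have hIH := ih t htsub htmap htinv
      rw [hfix]
      omega

/-! ### Explicit self-conjugate families -/

def evenM (a b : ℕ) : Multiset ℕ :=
  a ::ₘ b ::ₘ (Multiset.replicate (b - 2) 2 + Multiset.replicate (a - b) 1)

def oddM (a : ℕ) : Multiset ℕ := a ::ₘ 3 ::ₘ 3 ::ₘ Multiset.replicate (a - 3) 1

def gE (a b j : ℕ) : ℕ :=
  if j ≤ 1 then a else if j ≤ 2 then b else if j ≤ b then 2 else if j ≤ a then 1 else 0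

def gO (a j : ℕ) : ℕ :=
  if j ≤ 1 then a else if j ≤ 3 then 3 else if j ≤ a then 1 else 0

lemma filter_replicate (k c : ℕ) (q : ℕ → Prop) [DecidablePred q] :
    (Multiset.replicate k c).filter q = if q c then Multiset.replicate k c else 0 := by
  induction k with
  | zero => simp
  | succ k ih =>
    rw [Multiset.replicate_succ, Multiset.filter_cons, ih]
    split_ifs with h
    · rw [Multiset.singleton_add]
    · simp

lemma sum_evenM (a b : ℕ) (hb : 3 ≤ b) (hba : b ≤ a) : (evenM a b).sum = 2 * a + 2 * b - 4 := by
  rw [evenM, Multiset.sum_cons, Multiset.sum_cons, Multiset.sum_add,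
    Multiset.sum_replicate, Multiset.sum_replicate, smul_eq_mul, smul_eq_mul]
  omega

lemma sum_oddM (a : ℕ) (ha : 3 ≤ a) : (oddM a).sum = 2 * a + 3 := by
  rw [oddM, Multiset.sum_cons, Multiset.sum_cons, Multiset.sum_cons,
    Multiset.sum_replicate, smul_eq_mul]
  omega

lemma card_filter_evenM (a b j : ℕ) (hb : 3 ≤ b) (hba : b ≤ a) (hj : 1 ≤ j) :
    Multiset.card ((evenM a b).filter (fun x => j ≤ x)) = gE a b j := by
  rw [evenM, Multiset.filter_cons, Multiset.filter_cons, Multiset.filter_add,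
    filter_replicate, filter_replicate, gE]
  simp only [Multiset.card_add, apply_ite Multiset.card, Multiset.card_replicate,
    Multiset.card_singleton, Multiset.card_zero]
  split_ifs <;> omega

lemma card_filter_oddM (a j : ℕ) (ha : 3 ≤ a) (hj : 1 ≤ j) :
    Multiset.card ((oddM a).filter (fun x => j ≤ x)) = gO a j := by
  rw [oddM, Multiset.filter_cons, Multiset.filter_cons, Multiset.filter_cons,
    filter_replicate, gO]
  simp only [Multiset.card_add, apply_ite Multiset.card, Multiset.card_replicate,
    Multiset.card_singleton, Multiset.card_zero]
  split_ifs <;> omega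

lemma count_evenM (a b v : ℕ) (hb : 3 ≤ b) (hba : b ≤ a) :
    (evenM a b).count v = (if v = a then 1 else 0) + (if v = b then 1 else 0)
      + (if v = 2 then b - 2 else 0) + (if v = 1 then a - b else 0) := by
  rw [evenM, Multiset.count_cons, Multiset.count_cons, Multiset.count_add,
    Multiset.count_replicate, Multiset.count_replicate]
  split_ifs <;> omega

lemma count_oddM (a v : ℕ) (ha : 3 ≤ a) :
    (oddM a).count v = (if v = a then 1 else 0) + (if v = 3 then 2 else 0)
      + (if v = 1 then a - 3 else 0) := by
  rw [oddM, Multiset.count_cons, Multiset.count_cons, Multiset.count_cons,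
    Multiset.count_replicate]
  split_ifs <;> omega

lemma selfconj_of_sym {n : ℕ} (p : n.Partition)
    (h : ∀ m j, 1 ≤ m → 1 ≤ j → (j ≤ Np p m ↔ m ≤ Np p j)) : conj p = p := by
  apply ext_by_Np
  intro j hj
  apply nat_le_ext
  intro m hm
  rw [Np_conj_iff p hj hm]
  exact h m j hm hj

lemma sym_of_selfconj {n : ℕ} {p : n.Partition} (h : conj p = p)
    {m j : ℕ} (hm : 1 ≤ m) (hj : 1 ≤ j) : j ≤ Np p m ↔ m ≤ Np p j := by
  rw [← part_eq_Np_of_selfconj h hm]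
  exact part_dual p hm hj

lemma my_findGreatest_eq_iff {P : ℕ → Prop} {inst : DecidablePred P} {b m : ℕ} :
    @Nat.findGreatest P inst b = m ↔
      m ≤ b ∧ (m ≠ 0 → P m) ∧ ∀ k, m < k → k ≤ b → ¬P k := by
  rw [Nat.findGreatest_eq_iff]

lemma durfee_eq_four {n : ℕ} (p : n.Partition) (hn : 16 < n)
    (hC4 : ∀ i ∈ Finset.Icc 1 4, i ≤ Np p (5 - i))
    (hw : ∀ m, 5 ≤ m → ∃ i ∈ Finset.Icc 1 m, Np p (m + 1 - i) < i) : durfee p = 4 := by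
  unfold durfee
  rw [my_findGreatest_eq_iff]
  refine ⟨by omega, fun _ => (C_iff p 4).2 hC4, ?_⟩
  intro m hm4 hmn hCm
  rw [C_iff p m] at hCm
  obtain ⟨i, hi, hlt⟩ := hw m (by omega)
  exact absurd (hCm i hi) (by omega)

def evenPart (n a b : ℕ) (hb : 3 ≤ b) (hba : b ≤ a) (hsum : 2 * a + 2 * b - 4 = n) :
    n.Partition where
  parts := evenM a b
  parts_pos := by
    intro x hx
    rw [evenM, Multiset.mem_cons, Multiset.mem_cons, Multiset.mem_add] at hx
    rcases hx with rfl | rfl | hx | hx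
    · omega
    · omega
    · rw [Multiset.eq_of_mem_replicate hx]; omega
    · rw [Multiset.eq_of_mem_replicate hx]; omega
  parts_sum := by rw [sum_evenM a b hb hba]; exact hsum

def oddPart (n a : ℕ) (ha : 3 ≤ a) (hsum : 2 * a + 3 = n) : n.Partition where
  parts := oddM a
  parts_pos := by
    intro x hx
    rw [oddM, Multiset.mem_cons, Multiset.mem_cons, Multiset.mem_cons] at hx
    rcases hx with rfl | rfl | rfl | hx
    · omega
    · omega
    · omega
    · rw [Multiset.eq_of_mem_replicate hx]; omega
  parts_sum := by rw [sum_oddM a ha]; exact hsum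

lemma Np_eq_gE {n a b : ℕ} {p : n.Partition} (hp : p.parts = evenM a b)
    (hb : 3 ≤ b) (hba : b ≤ a) {j : ℕ} (hj : 1 ≤ j) : Np p j = gE a b j := by
  rw [Np, hp]
  exact card_filter_evenM a b j hb hba hj

lemma Np_eq_gO {n a : ℕ} {p : n.Partition} (hp : p.parts = oddM a)
    (ha : 3 ≤ a) {j : ℕ} (hj : 1 ≤ j) : Np p j = gO a j := by
  rw [Np, hp]
  exact card_filter_oddM a j ha hj

lemma selfconj_of_evenM {n a b : ℕ} {p : n.Partition} (hp : p.parts = evenM a b)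
    (hb : 3 ≤ b) (hba : b ≤ a) : conj p = p := by
  apply selfconj_of_sym
  intro m j hm hj
  rw [Np_eq_gE hp hb hba hm, Np_eq_gE hp hb hba hj, gE, gE]
  split_ifs <;> omega

lemma selfconj_of_oddM {n a : ℕ} {p : n.Partition} (hp : p.parts = oddM a)
    (ha : 3 ≤ a) : conj p = p := by
  apply selfconj_of_sym
  intro m j hm hj
  rw [Np_eq_gO hp ha hm, Np_eq_gO hp ha hj, gO, gO]
  split_ifs <;> omega

lemma durfee_of_evenM {n a b : ℕ} {p : n.Partition} (hp : p.parts = evenM a b)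
    (hn : 16 < n) (hb : 3 ≤ b) (hba : b ≤ a) (ha : 4 ≤ a) : durfee p = 4 := by
  apply durfee_eq_four p hn
  · intro i hi
    rw [Finset.mem_Icc] at hi
    rw [Np_eq_gE hp hb hba (by omega : (1:ℕ) ≤ 5 - i), gE]
    split_ifs <;> omega
  · intro m hm
    refine ⟨3, Finset.mem_Icc.2 (by omega), ?_⟩
    rw [Np_eq_gE hp hb hba (by omega : (1:ℕ) ≤ m + 1 - 3), gE]
    split_ifs <;> omega

lemma durfee_of_oddM {n a : ℕ} {p : n.Partition} (hp : p.parts = oddM a)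
    (hn : 16 < n) (ha : 4 ≤ a) : durfee p = 4 := by
  apply durfee_eq_four p hn
  · intro i hi
    rw [Finset.mem_Icc] at hi
    rw [Np_eq_gO hp (by omega) (by omega : (1:ℕ) ≤ 5 - i), gO]
    split_ifs <;> omega
  · intro m hm
    refine ⟨2, Finset.mem_Icc.2 (by omega), ?_⟩
    rw [Np_eq_gO hp (by omega) (by omega : (1:ℕ) ≤ m + 1 - 2), gO]
    split_ifs <;> omega

lemma sum_ind_le {n c : ℕ} (hc : c ≤ n) :
    ∑ j ∈ Finset.range n, (if j + 1 ≤ c then 1 else 0) = c := by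
  rw [← Finset.card_filter]
  have : (Finset.range n).filter (fun j => j + 1 ≤ c) = Finset.range c := by
    ext x
    simp only [Finset.mem_filter, Finset.mem_range]
    omega
  rw [this, Finset.card_range]

lemma sum_ind_eq {n t X : ℕ} (ht : 1 ≤ t) (htn : t ≤ n) :
    ∑ j ∈ Finset.range n, (if j + 1 = t then X else 0) = X := by
  rw [Finset.sum_congr rfl
    (fun j _ => if_congr (show j + 1 = t ↔ j = t - 1 by omega) rfl rfl)]
  rw [Finset.sum_ite_eq' (Finset.range n) (t - 1) (fun _ => X)]
  simp only [Finset.mem_range]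
  rw [if_pos (by omega)]

lemma gE_decomp (a b j : ℕ) (hb : 3 ≤ b) (hba : b ≤ a) (hj : 1 ≤ j) :
    gE a b j = (if j ≤ a then 1 else 0) + (if j ≤ b then 1 else 0)
      + (if j = 1 then a - 2 else 0) + (if j = 2 then b - 2 else 0) := by
  rw [gE]; split_ifs <;> omega

lemma gO_decomp (a j : ℕ) (ha : 3 ≤ a) (hj : 1 ≤ j) :
    gO a j = (if j ≤ a then 1 else 0) + (if j = 1 then a - 1 else 0)
      + (if j = 2 then 2 else 0) + (if j = 3 then 2 else 0) := by
  rw [gO]; split_ifs <;> omega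

lemma sum_gE {n a b : ℕ} (hb : 3 ≤ b) (hba : b ≤ a) (han : a ≤ n) (hn : 2 ≤ n) :
    ∑ j ∈ Finset.range n, gE a b (j + 1) = 2 * a + 2 * b - 4 := by
  rw [Finset.sum_congr rfl (fun j _ => gE_decomp a b (j + 1) hb hba (by omega))]
  rw [Finset.sum_add_distrib, Finset.sum_add_distrib, Finset.sum_add_distrib]
  rw [sum_ind_le han, sum_ind_le (le_trans hba han), sum_ind_eq (by omega) (by omega),
    sum_ind_eq (by omega) (by omega)]
  omega

lemma sum_gO {n a : ℕ} (ha : 3 ≤ a) (han : a ≤ n) (hn : 3 ≤ n) :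
    ∑ j ∈ Finset.range n, gO a (j + 1) = 2 * a + 3 := by
  rw [Finset.sum_congr rfl (fun j _ => gO_decomp a (j + 1) ha (by omega))]
  rw [Finset.sum_add_distrib, Finset.sum_add_distrib, Finset.sum_add_distrib]
  rw [sum_ind_le han, sum_ind_eq (by omega) (by omega), sum_ind_eq (by omega) (by omega),
    sum_ind_eq (by omega) (by omega)]
  omega

lemma sum_Np {n : ℕ} (p : n.Partition) : ∑ j ∈ Finset.range n, Np p (j + 1) = n := by
  have := sum_cols n p.parts (fun x hx => parts_le_n p hx)
  rw [p.parts_sum] at this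
  exact this

lemma classify {n : ℕ} (hn : 16 < n) (p : n.Partition) (hd : durfee p = 4) (hc : conj p = p) :
    (∃ a, 5 ≤ a ∧ p.parts = oddM a ∧ n = 2 * a + 3) ∨
    (∃ a b, 3 ≤ b ∧ b ≤ a ∧ 5 ≤ a ∧ p.parts = evenM a b ∧ n = 2 * a + 2 * b - 4) := by
  have sym : ∀ m j, 1 ≤ m → 1 ≤ j → (j ≤ Np p m ↔ m ≤ Np p j) :=
    fun m j hm hj => sym_of_selfconj hc hm hj
  unfold durfee at hd
  rw [my_findGreatest_eq_iff] at hd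
  obtain ⟨hd1, hd2, hd3⟩ := hd
  have hC4 := (C_iff p 4).1 (hd2 (by omega))
  have hs4 : 1 ≤ Np p 4 := by simpa using hC4 1 (Finset.mem_Icc.2 (by omega))
  have hs3 : 2 ≤ Np p 3 := by simpa using hC4 2 (Finset.mem_Icc.2 (by omega))
  have hs2 : 3 ≤ Np p 2 := by simpa using hC4 3 (Finset.mem_Icc.2 (by omega))
  have hs1 : 4 ≤ Np p 1 := by simpa using hC4 4 (Finset.mem_Icc.2 (by omega))
  have hnC5 : ¬ (∀ i ∈ Finset.Icc 1 5, i ≤ Np p (6 - i)) := by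
    intro h
    exact hd3 5 (by omega) (by omega) ((C_iff p 5).2 h)
  have hparts_le : ∀ x ∈ p.parts, x ≤ Np p 1 := by
    intro x hx
    have hx1 : 1 ≤ x := p.parts_pos hx
    have hpos : 1 ≤ Np p x := by
      rw [Np]
      have : x ∈ p.parts.filter (fun y => x ≤ y) := Multiset.mem_filter.2 ⟨hx, le_rfl⟩
      have := Multiset.card_pos_iff_exists_mem.2 ⟨x, this⟩
      omega
    exact (sym 1 x (by omega) hx1).2 hpos
  have hn_le : n ≤ Np p 1 * Np p 1 := by
    have h1 := Multiset.sum_le_card_nsmul p.parts (Np p 1) hparts_le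
    rw [p.parts_sum, ← Np_one, smul_eq_mul] at h1
    exact h1
  have hs1_5 : 5 ≤ Np p 1 := by
    by_contra hcon
    have h4 : Np p 1 ≤ 4 := by omega
    have := Nat.mul_le_mul h4 h4
    omega
  have hs5 : 1 ≤ Np p 5 := (sym 5 1 (by omega) (by omega)).2 hs1_5
  push_neg at hnC5
  obtain ⟨i, hi, hlt⟩ := hnC5
  rw [Finset.mem_Icc] at hi
  obtain ⟨hi1, hi5⟩ := hi
  have h23 : Np p 3 ≤ Np p 2 := Np_anti p (by omega)
  have hs1n : Np p 1 ≤ n := Np_le_n p 1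
  have hdich : Np p 3 = 2 ∨ (Np p 2 = 3 ∧ Np p 3 = 3) := by
    have hs43 : Np p 4 ≤ 1 → Np p 2 ≤ 3 := by
      intro h4
      by_contra hcon
      have := (sym 2 4 (by omega) (by omega)).1 (by omega)
      omega
    interval_cases i
    · norm_num at hlt; omega
    · norm_num at hlt; have := hs43 (by omega); omega
    · norm_num at hlt; omega
    · norm_num at hlt; omega
    · norm_num at hlt; omega
  set a := Np p 1 with hadef
  rcases hdich with h3 | ⟨h2, h3⟩
  · -- even family
    set b := Np p 2 with hbdef
    have hba : b ≤ a := Np_anti p (by omega)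
    have hval : ∀ j, 1 ≤ j → Np p j = gE a b j := by
      intro j hj
      rcases Nat.lt_or_ge j 3 with hj3 | hj3
      · interval_cases j
        · simp [gE]; omega
        · simp [gE]; omega
      · have hu2 : Np p j ≤ 2 := by
          by_contra hcon
          have := (sym j 3 hj (by omega)).1 (by omega)
          omega
        by_cases hjb : j ≤ b
        · have h2le : 2 ≤ Np p j := (sym j 2 hj (by omega)).2 hjb
          rw [gE]
          split_ifs <;> omega
        · by_cases hja : j ≤ a
          · have h1le : 1 ≤ Np p j := (sym j 1 hj (by omega)).2 hja
            have hu1 : Np p j ≤ 1 := by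
              by_contra hcon
              have := (sym j 2 hj (by omega)).1 (by omega)
              omega
            rw [gE]
            split_ifs <;> omega
          · have hu0 : Np p j = 0 := by
              by_contra hcon
              have := (sym j 1 hj (by omega)).1 (by omega)
              omega
            rw [gE]
            split_ifs <;> omega
    have hsum : n = 2 * a + 2 * b - 4 := by
      have h1 := sum_Np p
      rw [Finset.sum_congr rfl (fun j _ => hval (j + 1) (by omega))] at h1
      rw [sum_gE (by omega) hba hs1n (by omega)] at h1
      omega
    have hq : p = evenPart n a b (by omega) hba (by omega) := by
      apply ext_by_Np
      intro j hj
      rw [hval j hj, Np_eq_gE (p := evenPart n a b (by omega) hba (by omega)) rfl (by omega) hba hj]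
    right
    exact ⟨a, b, by omega, hba, by omega, by rw [hq]; rfl, hsum⟩
  · -- odd family
    have hval : ∀ j, 1 ≤ j → Np p j = gO a j := by
      intro j hj
      rcases Nat.lt_or_ge j 4 with hj4 | hj4
      · interval_cases j
        · simp [gO]; omega
        · simp [gO]; omega
        · simp [gO]; omega
      · have hu1 : Np p j ≤ 1 := by
          by_contra hcon
          have := (sym j 2 hj (by omega)).1 (by omega)
          omega
        by_cases hja : j ≤ a
        · have h1le : 1 ≤ Np p j := (sym j 1 hj (by omega)).2 hja
          rw [gO]
          split_ifs <;> omega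
        · have hu0 : Np p j = 0 := by
            by_contra hcon
            have := (sym j 1 hj (by omega)).1 (by omega)
            omega
          rw [gO]
          split_ifs <;> omega
    have hsum : n = 2 * a + 3 := by
      have h1 := sum_Np p
      rw [Finset.sum_congr rfl (fun j _ => hval (j + 1) (by omega))] at h1
      rw [sum_gO (by omega) hs1n (by omega)] at h1
      omega
    have hq : p = oddPart n a (by omega) (by omega) := by
      apply ext_by_Np
      intro j hj
      rw [hval j hj, Np_eq_gO (p := oddPart n a (by omega) (by omega)) rfl (by omega) hj]
    left
    exact ⟨a, by omega, by rw [hq]; rfl, hsum⟩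

lemma mem_fix_iff {n : ℕ} (p : n.Partition) :
    p ∈ (Finset.univ.filter (fun q : n.Partition => durfee q = 4)).filter
      (fun q => conj q = q) ↔ durfee p = 4 ∧ conj p = p := by
  simp only [Finset.mem_filter, Finset.mem_univ, true_and]

lemma fix_card_odd {n : ℕ} (hn : 16 < n) (hodd : n % 2 = 1) :
    ((Finset.univ.filter (fun p : n.Partition => durfee p = 4)).filter
      (fun p => conj p = p)).card = 1 := by
  rw [Finset.card_eq_one]
  refine ⟨oddPart n ((n - 3) / 2) (by omega) (by omega), ?_⟩
  ext q
  rw [mem_fix_iff, Finset.mem_singleton]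
  constructor
  · rintro ⟨hd, hc⟩
    rcases classify hn q hd hc with ⟨a, ha, hparts, hsum⟩ | ⟨a, b, hb, hba, ha, hparts, hsum⟩
    · have hae : a = (n - 3) / 2 := by omega
      apply Nat.Partition.ext
      rw [hparts, hae]
      rfl
    · exfalso
      omega
  · rintro rfl
    exact ⟨durfee_of_oddM rfl hn (by omega), selfconj_of_oddM rfl (by omega)⟩

lemma fix_card_even {n : ℕ} (hn : 16 < n) (heven : n % 2 = 0) :
    ((Finset.univ.filter (fun p : n.Partition => durfee p = 4)).filter
      (fun p => conj p = p)).card = (n + 4) / 4 - 2 := by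
  have hM : (Finset.Icc 3 ((n + 4) / 4)).card = (n + 4) / 4 - 2 := by
    rw [Nat.card_Icc]
    omega
  rw [← hM]
  refine Finset.card_bij' (fun p _ => Np p 2)
    (fun b hb => evenPart n ((n + 4) / 2 - b) b
      (by have := Finset.mem_Icc.1 hb; omega)
      (by have := Finset.mem_Icc.1 hb; omega)
      (by have := Finset.mem_Icc.1 hb; omega)) ?_ ?_ ?_ ?_
  · intro p hp
    obtain ⟨hd, hc⟩ := (mem_fix_iff p).1 hp
    rcases classify hn p hd hc with ⟨a, ha, hparts, hsum⟩ | ⟨a, b, hb, hba, ha, hparts, hsum⟩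
    · exfalso; omega
    · have h2 : Np p 2 = b := by
        rw [Np_eq_gE hparts hb hba (by omega), gE]
        norm_num
      show Np p 2 ∈ Finset.Icc 3 ((n + 4) / 4)
      rw [Finset.mem_Icc, h2]
      omega
  · intro b hb
    have hmb := Finset.mem_Icc.1 hb
    rw [mem_fix_iff]
    exact ⟨durfee_of_evenM rfl hn (by omega) (by omega) (by omega),
      selfconj_of_evenM rfl (by omega) (by omega)⟩
  · intro p hp
    obtain ⟨hd, hc⟩ := (mem_fix_iff p).1 hp
    rcases classify hn p hd hc with ⟨a, ha, hparts, hsum⟩ | ⟨a, b, hb, hba, ha, hparts, hsum⟩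
    · exfalso; omega
    · have h2 : Np p 2 = b := by
        rw [Np_eq_gE hparts hb hba (by omega), gE]
        norm_num
      apply Nat.Partition.ext
      show evenM ((n + 4) / 2 - Np p 2) (Np p 2) = p.parts
      rw [h2, hparts, show (n + 4) / 2 - b = a by omega]
  · intro b hb
    have hmb := Finset.mem_Icc.1 hb
    show Np (evenPart n ((n + 4) / 2 - b) b _ _ _) 2 = b
    rw [Np_eq_gE rfl (by omega) (by omega) (by omega), gE]
    norm_num

lemma R_mod_two {n : ℕ} (hn : 16 < n) :
    R 4 n % 2 = ((Finset.univ.filter (fun p : n.Partition => durfee p = 4)).filter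
      (fun p => conj p = p)).card % 2 := by
  have hR : R 4 n = (Finset.univ.filter (fun p : n.Partition => durfee p = 4)).card := by
    rw [R]
  rw [hR]
  apply card_modEq_filter_fixed
  · intro p hp
    rw [Finset.mem_filter] at hp ⊢
    exact ⟨Finset.mem_univ _, by rw [durfee_conj]; exact hp.2⟩
  · intro p _
    exact conj_conj p

end Parity4

theorem R_four_parity (n : ℕ) (hn : 16 < n) :
    ((n % 8 = 4 ∨ n % 8 = 6) → Even (R 4 n)) ∧
    ((n % 8 = 0 ∨ n % 8 = 1 ∨ n % 8 = 2 ∨ n % 8 = 3 ∨ n % 8 = 5 ∨ n % 8 = 7) →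
      Odd (R 4 n)) ∧
    (Odd n → Odd (R 4 n)) := by
  have hkey := Parity4.R_mod_two (n := n) hn
  rcases Nat.mod_two_eq_zero_or_one n with h2 | h2
  · rw [Parity4.fix_card_even hn h2] at hkey
    refine ⟨?_, ?_, ?_⟩
    · intro h
      rw [Nat.even_iff]
      omega
    · intro h
      rw [Nat.odd_iff]
      omega
    · intro h
      rw [Nat.odd_iff] at h ⊢
      omega
  · rw [Parity4.fix_card_odd hn h2] at hkey
    refine ⟨?_, ?_, ?_⟩
    · intro h
      rw [Nat.even_iff]
      omega
    · intro h
      rw [Nat.odd_iff]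
      omega
    · intro h
      rw [Nat.odd_iff] at h ⊢
      omega
end

section
/- For n > 25, R_5(n) is even if n ≡ 5 or 7 (mod 8), and odd if n ≡ 0, 1, 2, 3, 4, or 6 (mod 8). In particular, R_5(n) is odd for all even n > 25. -/
open Finset

namespace RFP

lemma part_zero {n : ℕ} (p : n.Partition) : part p 0 = part p 1 := rfl

lemma sorted_sort {n : ℕ} (p : n.Partition) :
    List.Pairwise (· ≥ ·) (p.parts.sort (· ≥ ·)) := Multiset.pairwise_sort _ _

lemma mem_sort {n : ℕ} (p : n.Partition) {x : ℕ}
    (hx : x ∈ p.parts.sort (· ≥ ·)) : 0 < x := by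
  apply p.parts_pos
  rwa [← Multiset.mem_coe, Multiset.sort_eq] at hx

lemma length_sort_le {n : ℕ} (p : n.Partition) :
    (p.parts.sort (· ≥ ·)).length ≤ n := by
  have h1 : (p.parts.sort (· ≥ ·)).length = Multiset.card p.parts := by
    rw [← Multiset.coe_card, Multiset.sort_eq]
  have h2 : Multiset.card p.parts • 1 ≤ p.parts.sum :=
    Multiset.card_nsmul_le_sum (fun x hx => p.parts_pos hx)
  rw [p.parts_sum] at h2
  simpa [h1] using h2

lemma part_antitone {n : ℕ} (p : n.Partition) {i j : ℕ} (hi : 1 ≤ i) (hij : i ≤ j) :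
    part p j ≤ part p i := by
  set l := p.parts.sort (· ≥ ·) with hl
  unfold part
  rcases lt_or_ge (j - 1) l.length with hj | hj
  · have hi' : i - 1 < l.length := lt_of_le_of_lt (by omega) hj
    rw [List.getD_eq_getElem l 0 hj, List.getD_eq_getElem l 0 hi']
    rcases eq_or_lt_of_le (show i - 1 ≤ j - 1 by omega) with h | h
    · simp [h]
    · exact List.Pairwise.rel_get_of_lt (sorted_sort p)
        (by simpa using h)
  · rw [List.getD_eq_default l 0 hj]
    exact Nat.zero_le _

lemma part_pos_iff {n : ℕ} (p : n.Partition) (i : ℕ) :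
    0 < part p i ↔ i - 1 < (p.parts.sort (· ≥ ·)).length := by
  set l := p.parts.sort (· ≥ ·) with hl
  constructor
  · intro h
    by_contra hc
    push_neg at hc
    rw [part, List.getD_eq_default l 0 hc] at h
    omega
  · intro h
    rw [part, List.getD_eq_getElem l 0 h]
    exact mem_sort p (l.getElem_mem h)

lemma part_le {n : ℕ} (p : n.Partition) (i : ℕ) : part p i ≤ n := by
  rcases Nat.eq_zero_or_pos (part p i) with h | h
  · omega
  · have h' : i - 1 < (p.parts.sort (· ≥ ·)).length := (part_pos_iff p i).mp h
    have hmem : part p i ∈ p.parts.sort (· ≥ ·) := by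
      rw [part, List.getD_eq_getElem _ 0 h']
      exact (p.parts.sort (· ≥ ·)).getElem_mem h' 
    have : part p i ∈ p.parts := by rwa [← Multiset.mem_coe, Multiset.sort_eq] at hmem
    have := Multiset.single_le_sum (fun x _ => Nat.zero_le x) _ this
    rwa [p.parts_sum] at this

lemma part_eq_zero {n : ℕ} (p : n.Partition) {i : ℕ} (hi : n < i) : part p i = 0 := by
  have h := length_sort_le p
  exact List.getD_eq_default _ 0 (by omega)

lemma sum_getD (l : List ℕ) : ∑ k ∈ range l.length, l.getD k 0 = l.sum := by
  induction l with
  | nil => simp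
  | cons a t ih =>
    rw [List.length_cons, Finset.sum_range_succ']
    have : ∀ k, (a :: t).getD (k+1) 0 = t.getD k 0 := fun k => rfl
    simp only [this, ih]
    simp [Nat.add_comm]

lemma sum_part {n : ℕ} (p : n.Partition) : ∑ i ∈ Icc 1 n, part p i = n := by
  set l := p.parts.sort (· ≥ ·) with hl
  have hlen := length_sort_le p
  have h1 : ∑ i ∈ Icc 1 n, part p i = ∑ k ∈ range n, l.getD k 0 := by
    apply Finset.sum_nbij' (fun i => i - 1) (fun k => k + 1) <;>
      simp +contextual [part, mem_Icc, mem_range, hl] <;> omega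
  rw [h1]
  have h2 : ∑ k ∈ range n, l.getD k 0 = ∑ k ∈ range l.length, l.getD k 0 := by
    symm
    apply Finset.sum_subset (Finset.range_subset_range.mpr hlen)
    intro k _ hk
    simp only [mem_range, not_lt] at hk
    exact List.getD_eq_default _ 0 hk
  rw [h2, sum_getD]
  have : l.sum = p.parts.sum := by rw [← Multiset.sort_eq p.parts (· ≥ ·)]; rfl
  rw [this, p.parts_sum]

lemma len_le {n : ℕ} (p q : n.Partition) (h : ∀ i, part p i = part q i) :
    (p.parts.sort (· ≥ ·)).length ≤ (q.parts.sort (· ≥ ·)).length := by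
  set lp := p.parts.sort (· ≥ ·) with hlp
  clear_value lp
  rcases Nat.eq_zero_or_pos lp.length with h0 | h0
  · omega
  · have h1 : 0 < part p (lp.length - 1 + 1) := by
      apply (part_pos_iff p _).mpr
      rw [← hlp]
      omega
    rw [h] at h1
    have h2 := (part_pos_iff q _).mp h1
    omega

lemma part_ext {n : ℕ} (p q : n.Partition) (h : ∀ i, part p i = part q i) : p = q := by
  have hlen : (p.parts.sort (· ≥ ·)).length = (q.parts.sort (· ≥ ·)).length :=
    le_antisymm (len_le p q h) (len_le q p (fun i => (h i).symm))
  have hlist : p.parts.sort (· ≥ ·) = q.parts.sort (· ≥ ·) := by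
    apply List.ext_getElem hlen
    intro k hk1 hk2
    have e1 : (p.parts.sort (· ≥ ·)).getD k 0 = (p.parts.sort (· ≥ ·))[k] :=
      List.getD_eq_getElem _ 0 hk1
    have e2 : (q.parts.sort (· ≥ ·)).getD k 0 = (q.parts.sort (· ≥ ·))[k] :=
      List.getD_eq_getElem _ 0 hk2
    have := h (k + 1)
    unfold part at this
    simp only [Nat.add_sub_cancel] at this
    rw [e1, e2] at this
    exact this
  apply Nat.Partition.ext
  rw [← Multiset.sort_eq p.parts (· ≥ ·), ← Multiset.sort_eq q.parts (· ≥ ·), hlist]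

-- SECTION 2
lemma sum_list_range_map (g : ℕ → ℕ) (m : ℕ) :
    ((List.range m).map g).sum = ∑ j ∈ range m, g j := by
  induction m with
  | zero => simp
  | succ m ih => rw [List.range_succ, Finset.sum_range_succ, List.map_append, List.sum_append, ih]; simp

lemma sort_coe (l : List ℕ) (hl : List.Pairwise (· ≥ ·) l) :
    Multiset.sort (↑l : Multiset ℕ) (· ≥ ·) = l := by
  apply List.Perm.eq_of_pairwise' (Multiset.pairwise_sort _ _) hl
  apply Multiset.coe_eq_coe.mp
  rw [Multiset.sort_eq]

def Cond (n m : ℕ) (f : ℕ → ℕ) : Prop :=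
  m ≤ n ∧ (∀ i j, 1 ≤ i → i ≤ j → f j ≤ f i) ∧ (∀ i, 1 ≤ i → i ≤ m → 1 ≤ f i) ∧
  (∀ i, m < i → f i = 0) ∧ (∑ i ∈ Icc 1 m, f i = n)

lemma pOf_list_sorted (m : ℕ) (f : ℕ → ℕ) (hf : ∀ i j, 1 ≤ i → i ≤ j → f j ≤ f i) :
    List.Pairwise (· ≥ ·) ((List.range m).map (fun j => f (j+1))) := by
  refine List.Pairwise.map _ ?_ (List.pairwise_lt_range (n := m))
  intro a b hab
  exact hf (a+1) (b+1) (by omega) (by omega)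

open Classical in
noncomputable def pOf (n m : ℕ) (f : ℕ → ℕ) : n.Partition :=
  if h : Cond n m f then
    { parts := ↑((List.range m).map (fun j => f (j+1))),
      parts_pos := by
        intro x hx
        rw [Multiset.mem_coe, List.mem_map] at hx
        obtain ⟨j, hj, rfl⟩ := hx
        rw [List.mem_range] at hj
        exact h.2.2.1 (j+1) (by omega) (by omega)
      parts_sum := by
        rw [Multiset.sum_coe, sum_list_range_map]
        rw [← h.2.2.2.2]
        apply Finset.sum_nbij' (fun j => j + 1) (fun i => i - 1)
        · intro a ha; rw [mem_range] at ha; rw [mem_Icc]; omega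
        · intro a ha; rw [mem_Icc] at ha; rw [mem_range]; omega
        · intro a ha; rw [mem_range] at ha; omega
        · intro a ha; rw [mem_Icc] at ha; omega
        · intro a ha; rfl }
  else default

lemma part_pOf {n m : ℕ} {f : ℕ → ℕ} (h : Cond n m f) (i : ℕ) (hi : 1 ≤ i) :
    part (pOf n m f) i = f i := by
  rw [pOf, dif_pos h]
  unfold part
  simp only
  rw [sort_coe _ (pOf_list_sorted m f h.2.1)]
  rcases lt_or_ge (i - 1) m with hc | hc
  · rw [List.getD_eq_getElem _ 0 (by simpa using hc)]
    simp only [List.getElem_map, List.getElem_range]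
    congr 1
    omega
  · rw [List.getD_eq_default _ 0 (by simpa using hc)]
    exact (h.2.2.2.1 i (by omega)).symm

def col {n : ℕ} (p : n.Partition) (j : ℕ) : ℕ :=
  ((Icc 1 n).filter (fun i => j ≤ part p i)).card

lemma col_le {n : ℕ} (p : n.Partition) (j : ℕ) : col p j ≤ n := by
  have := Finset.card_filter_le (Icc 1 n) (fun i => j ≤ part p i)
  simpa [col, Nat.card_Icc] using this

lemma col_antitone {n : ℕ} (p : n.Partition) {j j' : ℕ} (h : j ≤ j') :
    col p j' ≤ col p j := by
  apply Finset.card_le_card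
  intro i hi
  rw [mem_filter] at hi ⊢
  exact ⟨hi.1, by omega⟩

lemma galois {n : ℕ} (p : n.Partition) {i j : ℕ} (hi : 1 ≤ i) (hj : 1 ≤ j) :
    j ≤ part p i ↔ i ≤ col p j := by
  constructor
  · intro h
    have hin : i ≤ n := by
      by_contra hc
      rw [part_eq_zero p (by omega)] at h
      omega
    have hsub : Icc 1 i ⊆ (Icc 1 n).filter (fun t => j ≤ part p t) := by
      intro t ht
      rw [mem_Icc] at ht
      rw [mem_filter, mem_Icc]
      exact ⟨⟨ht.1, by omega⟩, le_trans h (part_antitone p ht.1 ht.2)⟩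
    have := Finset.card_le_card hsub
    simpa [Nat.card_Icc, col] using this
  · intro h
    by_contra hc
    push_neg at hc
    have hsub : (Icc 1 n).filter (fun t => j ≤ part p t) ⊆ Icc 1 (i-1) := by
      intro t ht
      rw [mem_filter, mem_Icc] at ht
      rw [mem_Icc]
      refine ⟨ht.1.1, ?_⟩
      by_contra hc2
      have : part p t ≤ part p i := part_antitone p hi (by omega)
      omega
    have := Finset.card_le_card hsub
    rw [Nat.card_Icc] at this
    unfold col at h
    omega

lemma cond_col {n : ℕ} (p : n.Partition) : Cond n (part p 1) (col p) := by
  refine ⟨part_le p 1, fun i j hi hij => col_antitone p hij, ?_, ?_, ?_⟩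
  · intro j hj hjm
    exact (galois p le_rfl hj).mp hjm
  · intro j hj
    by_contra hc
    have h1 : 1 ≤ col p j := by omega
    have := (galois p le_rfl (by
      by_contra hj0
      push_neg at hj0
      interval_cases j
      · have : col p 0 ≤ n := col_le p 0
        omega)).mpr h1
    omega
  · have hext : ∑ i ∈ Icc 1 (part p 1), col p i = ∑ i ∈ Icc 1 n, col p i := by
      apply Finset.sum_subset
      · apply Finset.Icc_subset_Icc_right (part_le p 1)
      · intro j hj hj2
        rw [mem_Icc] at hj hj2
        have hj1 : part p 1 < j := by omega
        by_contra hc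
        have h1 : 1 ≤ col p j := by omega
        have := (galois p le_rfl (by omega)).mpr h1
        omega
    rw [hext]
    have hswap : ∀ j, col p j = ∑ i ∈ Icc 1 n, if j ≤ part p i then 1 else 0 := by
      intro j
      rw [col, Finset.card_filter]
    calc ∑ j ∈ Icc 1 n, col p j
        = ∑ j ∈ Icc 1 n, ∑ i ∈ Icc 1 n, if j ≤ part p i then 1 else 0 := by
          exact Finset.sum_congr rfl (fun j _ => hswap j)
      _ = ∑ i ∈ Icc 1 n, ∑ j ∈ Icc 1 n, if j ≤ part p i then 1 else 0 := Finset.sum_comm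
      _ = ∑ i ∈ Icc 1 n, part p i := by
          apply Finset.sum_congr rfl
          intro i _
          rw [← Finset.card_filter]
          have : (Icc 1 n).filter (fun j => j ≤ part p i) = Icc 1 (part p i) := by
            ext j
            simp only [mem_filter, mem_Icc]
            have := part_le p i
            omega
          rw [this, Nat.card_Icc]
          omega
      _ = n := sum_part p

noncomputable def conj {n : ℕ} (p : n.Partition) : n.Partition :=
  pOf n (part p 1) (col p)

lemma part_conj {n : ℕ} (p : n.Partition) {j : ℕ} (hj : 1 ≤ j) :
    part (conj p) j = col p j := part_pOf (cond_col p) j hj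

lemma conj_conj {n : ℕ} (p : n.Partition) : conj (conj p) = p := by
  have H : ∀ i, 1 ≤ i → part (conj (conj p)) i = part p i := by
    intro i hi
    rw [part_conj _ hi]
    unfold col
    have : (Icc 1 n).filter (fun t => i ≤ part (conj p) t) = Icc 1 (part p i) := by
      ext t
      simp only [mem_filter, mem_Icc]
      constructor
      · rintro ⟨⟨ht1, htn⟩, h⟩
        rw [part_conj p ht1] at h
        exact ⟨ht1, (galois p hi ht1).mpr h⟩
      · rintro ⟨ht1, h⟩
        have htn : t ≤ n := le_trans h (part_le p i)
        refine ⟨⟨ht1, htn⟩, ?_⟩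
        rw [part_conj p ht1]
        exact (galois p hi ht1).mp h
    rw [this, Nat.card_Icc]
    omega
  apply part_ext
  intro i
  rcases Nat.eq_zero_or_pos i with rfl | hi
  · rw [part_zero (conj (conj p)), part_zero p]
    exact H 1 le_rfl
  · exact H i hi

def Stair {n : ℕ} (k : ℕ) (p : n.Partition) : Prop :=
  ∀ i ∈ Icc 1 k, k + 1 ≤ part p i + i

lemma stair_mono {n : ℕ} {j k : ℕ} {p : n.Partition} (hjk : j ≤ k) (h : Stair k p) :
    Stair j p := by
  intro i hi
  rw [mem_Icc] at hi
  have := h i (by rw [mem_Icc]; omega)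
  omega

lemma durfee_eq_fg {n : ℕ} (p : n.Partition) :
    durfee p = @Nat.findGreatest (fun k => ∀ i ∈ Icc 1 k, k + 1 ≤ part p i + i)
      (fun _ => Finset.decidableDforallFinset) n := by
  unfold durfee
  congr!

lemma durfee_eq_iff {n : ℕ} (p : n.Partition) (k : ℕ) (hk : 1 ≤ k) (hn : k + 1 ≤ n) :
    durfee p = k ↔ Stair k p ∧ ¬ Stair (k+1) p := by
  rw [durfee_eq_fg, Nat.findGreatest_eq_iff]
  constructor
  · rintro ⟨h1, h2, h3⟩
    exact ⟨h2 (by omega), h3 (by omega) hn⟩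
  · rintro ⟨h1, h2⟩
    refine ⟨by omega, fun _ => h1, ?_⟩
    intro m hm hmn hP
    exact h2 (stair_mono (by omega) hP)

lemma stair_durfee {n : ℕ} (p : n.Partition) (h : durfee p ≠ 0) : Stair (durfee p) p := by
  have h2 := (Nat.findGreatest_eq_iff.mp (durfee_eq_fg p).symm).2.1
  exact h2 (by omega)

lemma durfee_le {n : ℕ} (p : n.Partition) : durfee p ≤ n := by
  rw [durfee_eq_fg]
  exact Nat.findGreatest_le n

lemma stair_conj {n : ℕ} {k : ℕ} {p : n.Partition} (hk : k ≤ n) (h : Stair k p) :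
    Stair k (conj p) := by
  intro j hj
  rw [mem_Icc] at hj
  rw [part_conj p hj.1]
  have hsub : Icc 1 (k + 1 - j) ⊆ (Icc 1 n).filter (fun i => j ≤ part p i) := by
    intro i hi
    rw [mem_Icc] at hi
    rw [mem_filter, mem_Icc]
    refine ⟨⟨hi.1, by omega⟩, ?_⟩
    have := h i (by rw [mem_Icc]; omega)
    omega
  have := Finset.card_le_card hsub
  rw [Nat.card_Icc] at this
  unfold col
  omega

lemma durfee_conj {n : ℕ} (p : n.Partition) : durfee (conj p) = durfee p := by
  have key : ∀ q : n.Partition, durfee q ≤ durfee (conj q) := by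
    intro q
    rcases Nat.eq_zero_or_pos (durfee q) with h0 | h0
    · omega
    · have hle : durfee q ≤ n := durfee_le q
      have hspec := stair_conj hle (stair_durfee q (by omega))
      rw [durfee_eq_fg (conj q)]
      exact Nat.le_findGreatest hle hspec
  have h1 := key p
  have h2 := key (conj p)
  rw [conj_conj p] at h2
  omega
-- SECTION 3 : parity via involution
lemma card_invol_modEq {α : Type*} [DecidableEq α] (s : Finset α) (f : α → α)
    [DecidablePred (fun x => f x = x)]
    (h1 : ∀ x ∈ s, f x ∈ s) (h2 : ∀ x ∈ s, f (f x) = x) :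
    s.card % 2 = (s.filter fun x => f x = x).card % 2 := by
  classical
  have hsplit := Finset.card_filter_add_card_filter_not
    (s := s) (p := fun x => f x = x)
  set t := s.filter (fun x => ¬ f x = x) with ht
  have hsum : ∑ _x ∈ t, (1 : ZMod 2) = 0 := by
    apply Finset.sum_involution (fun a _ => f a)
    · intro a ha; decide
    · intro a ha _
      rw [ht, mem_filter] at ha
      exact fun h => ha.2 h
    · intro a ha
      rw [ht, mem_filter] at ha ⊢
      refine ⟨h1 a ha.1, ?_⟩
      intro h
      exact ha.2 ((h.symm).trans (h2 a ha.1))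
    · intro a ha
      rw [ht, mem_filter] at ha
      exact h2 a ha.1
  rw [Finset.sum_const, nsmul_eq_mul, mul_one] at hsum
  have : (2 : ℕ) ∣ t.card := (ZMod.natCast_eq_zero_iff _ 2).mp hsum
  omega

open Classical in
lemma R_five_modEq {n : ℕ} (hn : 6 ≤ n) :
    R 5 n % 2 =
      (Finset.univ.filter fun p : n.Partition => durfee p = 5 ∧ conj p = p).card % 2 := by
  classical
  unfold R
  rw [card_invol_modEq (Finset.univ.filter fun p : n.Partition => durfee p = 5) conj
    (by
      intro p hp
      simp only [mem_filter, mem_univ, true_and] at hp ⊢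
      rw [durfee_conj, hp])
    (by intro p _; exact conj_conj p)]
  congr 1
  rw [Finset.filter_filter]
-- SECTION 4 : the three families
def fA (a b i : ℕ) : ℕ :=
  if i = 1 then a else if i = 2 then b else if i = 3 then 3
  else if i ≤ b then 2 else if i ≤ a then 1 else 0

def fB (a i : ℕ) : ℕ :=
  if i = 1 then a else if i ≤ 3 then 4 else if i = 4 then 3
  else if i ≤ a then 1 else 0

def fE (a i : ℕ) : ℕ :=
  if i = 1 then a else if i ≤ 4 then 4 else if i ≤ a then 1 else 0

lemma sumA {a b : ℕ} (h4 : 4 ≤ b) (hba : b ≤ a) :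
    ∑ i ∈ Icc 1 a, fA a b i = 2*a + 2*b - 3 := by
  have hcong : ∀ i ∈ Icc 1 a, fA a b i =
      (if i ≤ a then 1 else 0) + (if i ≤ b then 1 else 0) + (if i = 1 then a - 2 else 0)
      + (if i = 2 then b - 2 else 0) + (if i = 3 then 1 else 0) := by
    intro i hi
    rw [mem_Icc] at hi
    unfold fA
    split_ifs <;> omega
  rw [Finset.sum_congr rfl hcong]
  have e1 : ∑ i ∈ Icc 1 a, (if i ≤ a then (1:ℕ) else 0) = a := by
    rw [← Finset.card_filter]
    have : (Icc 1 a).filter (fun i => i ≤ a) = Icc 1 a := by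
      ext i; simp only [mem_filter, mem_Icc]; omega
    rw [this, Nat.card_Icc]; omega
  have e2 : ∑ i ∈ Icc 1 a, (if i ≤ b then (1:ℕ) else 0) = b := by
    rw [← Finset.card_filter]
    have : (Icc 1 a).filter (fun i => i ≤ b) = Icc 1 b := by
      ext i; simp only [mem_filter, mem_Icc]; omega
    rw [this, Nat.card_Icc]; omega
  simp only [Finset.sum_add_distrib, e1, e2, Finset.sum_ite_eq' (Icc 1 a)]
  simp only [mem_Icc]
  rw [if_pos (by omega : 1 ≤ 1 ∧ 1 ≤ a), if_pos (by omega : 1 ≤ 2 ∧ 2 ≤ a),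
    if_pos (by omega : 1 ≤ 3 ∧ 3 ≤ a)]
  omega

lemma sumB {a : ℕ} (h5 : 5 ≤ a) :
    ∑ i ∈ Icc 1 a, fB a i = 2*a + 7 := by
  have hcong : ∀ i ∈ Icc 1 a, fB a i =
      (if i ≤ a then 1 else 0) + (if i ≤ 3 then 3 else 0) + (if i = 4 then 2 else 0)
      + (if i = 1 then a - 4 else 0) := by
    intro i hi
    rw [mem_Icc] at hi
    unfold fB
    split_ifs <;> omega
  rw [Finset.sum_congr rfl hcong]
  have e1 : ∑ i ∈ Icc 1 a, (if i ≤ a then (1:ℕ) else 0) = a := by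
    rw [← Finset.card_filter]
    have : (Icc 1 a).filter (fun i => i ≤ a) = Icc 1 a := by
      ext i; simp only [mem_filter, mem_Icc]; omega
    rw [this, Nat.card_Icc]; omega
  have e2 : ∑ i ∈ Icc 1 a, (if i ≤ 3 then (3:ℕ) else 0) = 9 := by
    rw [Finset.sum_ite, Finset.sum_const, Finset.sum_const]
    have : (Icc 1 a).filter (fun i => i ≤ 3) = Icc 1 3 := by
      ext i; simp only [mem_filter, mem_Icc]; omega
    rw [this, Nat.card_Icc]
    simp [smul_eq_mul]
  simp only [Finset.sum_add_distrib, e1, e2, Finset.sum_ite_eq' (Icc 1 a)]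
  simp only [mem_Icc]
  rw [if_pos (by omega : 1 ≤ 4 ∧ 4 ≤ a), if_pos (by omega : 1 ≤ 1 ∧ 1 ≤ a)]
  omega

lemma sumE {a : ℕ} (h5 : 5 ≤ a) :
    ∑ i ∈ Icc 1 a, fE a i = 2*a + 8 := by
  have hcong : ∀ i ∈ Icc 1 a, fE a i =
      (if i ≤ a then 1 else 0) + (if i ≤ 4 then 3 else 0) + (if i = 1 then a - 4 else 0) := by
    intro i hi
    rw [mem_Icc] at hi
    unfold fE
    split_ifs <;> omega
  rw [Finset.sum_congr rfl hcong]
  have e1 : ∑ i ∈ Icc 1 a, (if i ≤ a then (1:ℕ) else 0) = a := by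
    rw [← Finset.card_filter]
    have : (Icc 1 a).filter (fun i => i ≤ a) = Icc 1 a := by
      ext i; simp only [mem_filter, mem_Icc]; omega
    rw [this, Nat.card_Icc]; omega
  have e2 : ∑ i ∈ Icc 1 a, (if i ≤ 4 then (3:ℕ) else 0) = 12 := by
    rw [Finset.sum_ite, Finset.sum_const, Finset.sum_const]
    have : (Icc 1 a).filter (fun i => i ≤ 4) = Icc 1 4 := by
      ext i; simp only [mem_filter, mem_Icc]; omega
    rw [this, Nat.card_Icc]
    simp [smul_eq_mul]
  simp only [Finset.sum_add_distrib, e1, e2, Finset.sum_ite_eq' (Icc 1 a)]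
  simp only [mem_Icc]
  rw [if_pos (by omega : 1 ≤ 1 ∧ 1 ≤ a)]
  omega

lemma condA {n a b : ℕ} (h4 : 4 ≤ b) (hba : b ≤ a) (han : a ≤ n)
    (hsum : 2*a + 2*b = n + 3) : Cond n a (fA a b) := by
  refine ⟨han, ?_, ?_, ?_, ?_⟩
  · intro i j hi hij; unfold fA; split_ifs <;> omega
  · intro i hi him; unfold fA; split_ifs <;> omega
  · intro i hia; unfold fA; split_ifs <;> omega
  · rw [sumA h4 hba]; omega

lemma condB {n a : ℕ} (h5 : 5 ≤ a) (han : a ≤ n) (hsum : 2*a + 7 = n) :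
    Cond n a (fB a) := by
  refine ⟨han, ?_, ?_, ?_, ?_⟩
  · intro i j hi hij; unfold fB; split_ifs <;> omega
  · intro i hi him; unfold fB; split_ifs <;> omega
  · intro i hia; unfold fB; split_ifs <;> omega
  · rw [sumB h5]; omega

lemma condE {n a : ℕ} (h5 : 5 ≤ a) (han : a ≤ n) (hsum : 2*a + 8 = n) :
    Cond n a (fE a) := by
  refine ⟨han, ?_, ?_, ?_, ?_⟩
  · intro i j hi hij; unfold fE; split_ifs <;> omega
  · intro i hi him; unfold fE; split_ifs <;> omega
  · intro i hia; unfold fE; split_ifs <;> omega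
  · rw [sumE h5]; omega

noncomputable def famA (n b : ℕ) : n.Partition := pOf n ((n+3)/2 - b) (fA ((n+3)/2 - b) b)
noncomputable def famB (n : ℕ) : n.Partition := pOf n ((n-7)/2) (fB ((n-7)/2))
noncomputable def famE (n : ℕ) : n.Partition := pOf n ((n-8)/2) (fE ((n-8)/2))

-- hypotheses bundle for famA
lemma famA_facts {n b : ℕ} (hn : 25 < n) (ho : n % 2 = 1) (h4 : 4 ≤ b)
    (hbn : b ≤ (n+3)/4) :
    4 ≤ b ∧ b ≤ (n+3)/2 - b ∧ (n+3)/2 - b ≤ n ∧ 2*((n+3)/2 - b) + 2*b = n + 3 ∧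
      5 ≤ (n+3)/2 - b := by omega

lemma part_famA {n b : ℕ} (hn : 25 < n) (ho : n % 2 = 1) (h4 : 4 ≤ b)
    (hbn : b ≤ (n+3)/4) {i : ℕ} (hi : 1 ≤ i) :
    part (famA n b) i = fA ((n+3)/2 - b) b i := by
  obtain ⟨c1, c2, c3, c4, c5⟩ := famA_facts hn ho h4 hbn
  exact part_pOf (condA c1 c2 c3 c4) i hi

lemma part_famB {n : ℕ} (hn : 25 < n) (ho : n % 2 = 1) {i : ℕ} (hi : 1 ≤ i) :
    part (famB n) i = fB ((n-7)/2) i :=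
  part_pOf (condB (by omega) (by omega) (by omega)) i hi

lemma part_famE {n : ℕ} (hn : 25 < n) (he : n % 2 = 0) {i : ℕ} (hi : 1 ≤ i) :
    part (famE n) i = fE ((n-8)/2) i :=
  part_pOf (condE (by omega) (by omega) (by omega)) i hi

-- self-conjugacy criterion
lemma selfconj_of {n : ℕ} (q : n.Partition) (f : ℕ → ℕ)
    (hq : ∀ i, 1 ≤ i → part q i = f i)
    (hsc : ∀ i j, 1 ≤ i → 1 ≤ j → (j ≤ f i ↔ i ≤ f j)) : conj q = q := by
  have H : ∀ j, 1 ≤ j → part (conj q) j = part q j := by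
    intro j hj
    rw [part_conj _ hj]
    unfold col
    have hfj : f j ≤ n := by rw [← hq j hj]; exact part_le q j
    have : (Icc 1 n).filter (fun i => j ≤ part q i) = Icc 1 (f j) := by
      ext i
      simp only [mem_filter, mem_Icc]
      constructor
      · rintro ⟨⟨hi1, hin⟩, h⟩
        rw [hq i hi1] at h
        exact ⟨hi1, (hsc i j hi1 hj).mp h⟩
      · rintro ⟨hi1, h⟩
        refine ⟨⟨hi1, by omega⟩, ?_⟩
        rw [hq i hi1]
        exact (hsc i j hi1 hj).mpr h
    rw [this, Nat.card_Icc, hq j hj]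
    omega
  apply part_ext
  intro i
  rcases Nat.eq_zero_or_pos i with rfl | hi
  · rw [part_zero (conj q), part_zero q]; exact H 1 le_rfl
  · exact H i hi

lemma conj_famA {n b : ℕ} (hn : 25 < n) (ho : n % 2 = 1) (h4 : 4 ≤ b)
    (hbn : b ≤ (n+3)/4) : conj (famA n b) = famA n b := by
  obtain ⟨c1, c2, c3, c4, c5⟩ := famA_facts hn ho h4 hbn
  apply selfconj_of _ (fA ((n+3)/2 - b) b) (fun i hi => part_famA hn ho h4 hbn hi)
  intro i j hi hj
  unfold fA
  split_ifs <;> omega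

lemma conj_famB {n : ℕ} (hn : 25 < n) (ho : n % 2 = 1) : conj (famB n) = famB n := by
  apply selfconj_of _ (fB ((n-7)/2)) (fun i hi => part_famB hn ho hi)
  intro i j hi hj
  unfold fB
  split_ifs <;> omega

lemma conj_famE {n : ℕ} (hn : 25 < n) (he : n % 2 = 0) : conj (famE n) = famE n := by
  apply selfconj_of _ (fE ((n-8)/2)) (fun i hi => part_famE hn he hi)
  intro i j hi hj
  unfold fE
  split_ifs <;> omega

lemma durfee_famA {n b : ℕ} (hn : 25 < n) (ho : n % 2 = 1) (h4 : 4 ≤ b)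
    (hbn : b ≤ (n+3)/4) : durfee (famA n b) = 5 := by
  obtain ⟨c1, c2, c3, c4, c5⟩ := famA_facts hn ho h4 hbn
  rw [durfee_eq_iff _ 5 (by omega) (by omega)]
  constructor
  · intro i hi
    rw [mem_Icc] at hi
    rw [part_famA hn ho h4 hbn hi.1]
    unfold fA
    split_ifs <;> omega
  · intro h
    have := h 3 (by rw [mem_Icc]; omega)
    rw [part_famA hn ho h4 hbn (by omega)] at this
    unfold fA at this
    simp at this
lemma durfee_famB {n : ℕ} (hn : 25 < n) (ho : n % 2 = 1) : durfee (famB n) = 5 := by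
  rw [durfee_eq_iff _ 5 (by omega) (by omega)]
  constructor
  · intro i hi
    rw [mem_Icc] at hi
    rw [part_famB hn ho hi.1]
    unfold fB
    split_ifs <;> omega
  · intro h
    have := h 5 (by rw [mem_Icc]; omega)
    rw [part_famB hn ho (by omega)] at this
    unfold fB at this
    split_ifs at this <;> omega

lemma durfee_famE {n : ℕ} (hn : 25 < n) (he : n % 2 = 0) : durfee (famE n) = 5 := by
  rw [durfee_eq_iff _ 5 (by omega) (by omega)]
  constructor
  · intro i hi
    rw [mem_Icc] at hi
    rw [part_famE hn he hi.1]
    unfold fE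
    split_ifs <;> omega
  · intro h
    have := h 5 (by rw [mem_Icc]; omega)
    rw [part_famE hn he (by omega)] at this
    unfold fE at this
    split_ifs at this <;> omega
-- SECTION 5 : classification of self-conjugate durfee-5 partitions
lemma classify {n : ℕ} (hn : 25 < n) (p : n.Partition) (hd : durfee p = 5)
    (hc : conj p = p) :
    (n % 2 = 1 ∧ ∃ b, 4 ≤ b ∧ b ≤ (n+3)/4 ∧ p = famA n b) ∨
    (n % 2 = 1 ∧ p = famB n) ∨ (n % 2 = 0 ∧ p = famE n) := by
  have hcol : ∀ j, 1 ≤ j → col p j = part p j := by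
    intro j hj
    rw [← part_conj p hj, hc]
  have hsc : ∀ i j, 1 ≤ i → 1 ≤ j → (j ≤ part p i ↔ i ≤ part p j) := by
    intro i j hi hj
    rw [galois p hi hj, hcol j hj]
  obtain ⟨h5, h6⟩ := (durfee_eq_iff p 5 (by omega) (by omega)).mp hd
  have p1 : 5 ≤ part p 1 := by have := h5 1 (by rw [mem_Icc]; omega); omega
  have p2 : 4 ≤ part p 2 := by have := h5 2 (by rw [mem_Icc]; omega); omega
  have p3 : 3 ≤ part p 3 := by have := h5 3 (by rw [mem_Icc]; omega); omega
  have p4 : 2 ≤ part p 4 := by have := h5 4 (by rw [mem_Icc]; omega); omega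
  have p5 : 1 ≤ part p 5 := by have := h5 5 (by rw [mem_Icc]; omega); omega
  have hbig : ¬ (part p 1 ≤ 5) := by
    intro hle
    have hz : part p 6 = 0 := by
      by_contra hz
      have := (hsc 6 1 (by omega) (by omega)).mp (by omega)
      omega
    have hs1 : ∑ i ∈ Icc 1 n, part p i = n := sum_part p
    have hss : ∑ i ∈ Icc 1 n, part p i = ∑ i ∈ Icc 1 5, part p i := by
      symm
      apply Finset.sum_subset (Finset.Icc_subset_Icc_right (by omega))
      intro i hi hi2
      rw [mem_Icc] at hi
      rw [mem_Icc] at hi2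
      have : part p i ≤ part p 6 := part_antitone p (by omega) (by omega)
      omega
    have hb : ∑ i ∈ Icc 1 5, part p i ≤ 5 * 5 := by
      have : ∀ i ∈ Icc 1 5, part p i ≤ 5 := by
        intro i hi
        rw [mem_Icc] at hi
        have := part_antitone p (by omega : 1 ≤ 1) (hi.1)
        omega
      calc ∑ i ∈ Icc 1 5, part p i ≤ ∑ _i ∈ Icc 1 5, 5 := Finset.sum_le_sum this
        _ = 5 * 5 := by rw [Finset.sum_const, Nat.card_Icc]; simp [smul_eq_mul]
    omega
  -- generic tail lemma: fill parts from the sum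
  have sum_tail : ∀ f : ℕ → ℕ, (∀ i, 1 ≤ i → part p i = f i) →
      ∑ i ∈ Icc 1 (part p 1), f i = n := by
    intro f hf
    have h1 : ∑ i ∈ Icc 1 n, part p i = n := sum_part p
    have h2 : ∑ i ∈ Icc 1 n, part p i = ∑ i ∈ Icc 1 (part p 1), part p i := by
      symm
      apply Finset.sum_subset (Finset.Icc_subset_Icc_right (part_le p 1))
      intro i hi hi2
      rw [mem_Icc] at hi
      rw [mem_Icc] at hi2
      by_contra hne
      have := (hsc i 1 (by omega) (by omega)).mp (by omega)
      omega
    have h3 : ∑ i ∈ Icc 1 (part p 1), part p i = ∑ i ∈ Icc 1 (part p 1), f i := by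
      apply Finset.sum_congr rfl
      intro i hi
      rw [mem_Icc] at hi
      exact hf i hi.1
    omega
  have caseC1 : part p 3 = 3 →
      (n % 2 = 1 ∧ ∃ b, 4 ≤ b ∧ b ≤ (n+3)/4 ∧ p = famA n b) ∨
      (n % 2 = 1 ∧ p = famB n) ∨ (n % 2 = 0 ∧ p = famE n) := by
    intro h3
    have hba : part p 2 ≤ part p 1 := part_antitone p le_rfl (by omega)
    have h42 : part p 4 = 2 := by
      have hle : ¬ 3 ≤ part p 4 := by
        intro hge3
        have := (hsc 4 3 (by omega) (by omega)).mp hge3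
        omega
      omega
    have key : ∀ i, 1 ≤ i → part p i = fA (part p 1) (part p 2) i := by
      intro i hi
      unfold fA
      split_ifs with e1 e2 e3 e4 e5
      · rw [e1]
      · rw [e2]
      · rw [e3]; exact h3
      · -- 4 ≤ i ≤ part p 2 : part = 2
        have hge : 2 ≤ part p i := (hsc i 2 (by omega) (by omega)).mpr e4
        have hlt : ¬ 3 ≤ part p i := by
          intro hge3
          have := (hsc i 3 (by omega) (by omega)).mp hge3
          omega
        omega
      · -- part p 2 < i ≤ part p 1 : part = 1
        have hge : 1 ≤ part p i := (hsc i 1 (by omega) (by omega)).mpr e5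
        have hlt : ¬ 2 ≤ part p i := by
          intro hge2
          have := (hsc i 2 (by omega) (by omega)).mp hge2
          omega
        omega
      · -- i > part p 1 : part = 0
        by_contra hne
        have := (hsc i 1 (by omega) (by omega)).mp (by omega)
        omega
    have hsum : 2 * part p 1 + 2 * part p 2 = n + 3 := by
      have := sum_tail _ key
      rw [sumA (by omega) hba] at this
      omega
    have hodd : n % 2 = 1 := by omega
    have h4b : 4 ≤ part p 2 := p2
    have hbn : part p 2 ≤ (n+3)/4 := by omega
    have ha : (n+3)/2 - part p 2 = part p 1 := by omega
    left
    refine ⟨hodd, part p 2, h4b, hbn, ?_⟩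
    apply part_ext
    have H : ∀ i, 1 ≤ i → part p i = part (famA n (part p 2)) i := by
      intro i hi
      rw [part_famA hn hodd h4b hbn hi, ha, key i hi]
    intro i
    rcases Nat.eq_zero_or_pos i with rfl | hi
    · rw [part_zero p, part_zero (famA n (part p 2))]; exact H 1 le_rfl
    · exact H i hi
  have caseC2 : part p 2 = 4 →
      (n % 2 = 1 ∧ ∃ b, 4 ≤ b ∧ b ≤ (n+3)/4 ∧ p = famA n b) ∨
      (n % 2 = 1 ∧ p = famB n) ∨ (n % 2 = 0 ∧ p = famE n) := by
    intro h2'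
    have h51 : part p 5 = 1 := by
      have : ¬ 2 ≤ part p 5 := by
        intro hge
        have := (hsc 5 2 (by omega) (by omega)).mp hge
        omega
      omega
    have h3le : part p 3 ≤ 4 := by
      have := part_antitone p (by omega : 1 ≤ 2) (by omega : 2 ≤ 3)
      omega
    rcases Nat.eq_or_lt_of_le p3 with h3eq | h3gt
    · exact caseC1 h3eq.symm
    have h34 : part p 3 = 4 := by omega
    have h4ge : 3 ≤ part p 4 := (hsc 4 3 (by omega) (by omega)).mpr (by omega)
    have h4le : part p 4 ≤ 4 := by
      have := part_antitone p (by omega : 1 ≤ 3) (by omega : 3 ≤ 4)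
      omega
    have tail1 : ∀ i, 5 ≤ i → i ≤ part p 1 → part p i = 1 := by
      intro i hi hia
      have hge : 1 ≤ part p i := (hsc i 1 (by omega) (by omega)).mpr hia
      have hlt : ¬ 2 ≤ part p i := by
        intro hge2
        have := (hsc i 2 (by omega) (by omega)).mp hge2
        omega
      omega
    have tail0 : ∀ i, part p 1 < i → part p i = 0 := by
      intro i hia
      by_contra hne
      have := (hsc i 1 (by omega) (by omega)).mp (by omega)
      omega
    rcases Nat.eq_or_lt_of_le h4ge with h4eq | h4gt
    · -- part p 4 = 3 : famB
      have h43 : part p 4 = 3 := h4eq.symm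
      have key : ∀ i, 1 ≤ i → part p i = fB (part p 1) i := by
        intro i hi
        unfold fB
        split_ifs with e1 e2 e3 e4
        · rw [e1]
        · have : i = 2 ∨ i = 3 := by omega
          rcases this with rfl | rfl
          · exact h2'
          · exact h34
        · rw [e3]; exact h43
        · exact tail1 i (by omega) e4
        · exact tail0 i (by omega)
      have hsum : 2 * part p 1 + 7 = n := by
        have := sum_tail _ key
        rw [sumB (by omega)] at this
        omega
      have hodd : n % 2 = 1 := by omega
      have ha : (n-7)/2 = part p 1 := by omega
      right; left
      refine ⟨hodd, ?_⟩
      apply part_ext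
      have H : ∀ i, 1 ≤ i → part p i = part (famB n) i := by
        intro i hi
        rw [part_famB hn hodd hi, ha, key i hi]
      intro i
      rcases Nat.eq_zero_or_pos i with rfl | hi
      · rw [part_zero p, part_zero (famB n)]; exact H 1 le_rfl
      · exact H i hi
    · -- part p 4 = 4 : famE
      have h44 : part p 4 = 4 := by omega
      have key : ∀ i, 1 ≤ i → part p i = fE (part p 1) i := by
        intro i hi
        unfold fE
        split_ifs with e1 e2 e3
        · rw [e1]
        · have : i = 2 ∨ i = 3 ∨ i = 4 := by omega
          rcases this with rfl | rfl | rfl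
          · exact h2'
          · exact h34
          · exact h44
        · exact tail1 i (by omega) e3
        · exact tail0 i (by omega)
      have hsum : 2 * part p 1 + 8 = n := by
        have := sum_tail _ key
        rw [sumE (by omega)] at this
        omega
      have heven : n % 2 = 0 := by omega
      have ha : (n-8)/2 = part p 1 := by omega
      right; right
      refine ⟨heven, ?_⟩
      apply part_ext
      have H : ∀ i, 1 ≤ i → part p i = part (famE n) i := by
        intro i hi
        rw [part_famE hn heven hi, ha, key i hi]
      intro i
      rcases Nat.eq_zero_or_pos i with rfl | hi
      · rw [part_zero p, part_zero (famE n)]; exact H 1 le_rfl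
      · exact H i hi
  unfold Stair at h6
  push_neg at h6
  obtain ⟨i0, hi0, hlt⟩ := h6
  rw [mem_Icc] at hi0
  obtain ⟨hi01, hi02⟩ := hi0
  interval_cases i0
  · exact absurd (by omega) hbig
  · exact caseC2 (by omega)
  · exact caseC1 (by omega)
  · have h3eq : part p 3 = 3 := by
      have : ¬ 4 ≤ part p 3 := by
        intro hge
        have := (hsc 3 4 (by omega) (by omega)).mp hge
        omega
      omega
    exact caseC1 h3eq
  · have h2eq : part p 2 = 4 := by
      have : ¬ 5 ≤ part p 2 := by
        intro hge
        have := (hsc 2 5 (by omega) (by omega)).mp hge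
        omega
      omega
    exact caseC2 h2eq
  · exfalso
    apply hbig
    by_contra hgt
    have := (hsc 1 6 (by omega) (by omega)).mp (by omega)
    omega
-- SECTION 6 : counting and the final theorem
open Classical in
lemma card_S_odd {n : ℕ} (hn : 25 < n) (ho : n % 2 = 1) :
    (Finset.univ.filter fun p : n.Partition => durfee p = 5 ∧ conj p = p).card
      = (n+3)/4 - 2 := by
  classical
  have hset : (Finset.univ.filter fun p : n.Partition => durfee p = 5 ∧ conj p = p)
      = ((Icc 4 ((n+3)/4)).image (fun b => famA n b)) ∪ {famB n} := by
    ext p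
    simp only [mem_filter, mem_univ, true_and, mem_union, mem_image, mem_singleton, mem_Icc]
    constructor
    · rintro ⟨hd, hc⟩
      rcases classify hn p hd hc with ⟨_, b, h4, hbn, rfl⟩ | ⟨_, rfl⟩ | ⟨he, _⟩
      · exact Or.inl ⟨b, ⟨h4, hbn⟩, rfl⟩
      · exact Or.inr rfl
      · omega
    · rintro (⟨b, ⟨h4, hbn⟩, rfl⟩ | rfl)
      · exact ⟨durfee_famA hn ho h4 hbn, conj_famA hn ho h4 hbn⟩
      · exact ⟨durfee_famB hn ho, conj_famB hn ho⟩
  rw [hset]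
  rw [Finset.card_union_of_disjoint]
  · rw [Finset.card_image_of_injOn, Nat.card_Icc, Finset.card_singleton]
    · omega
    · intro b1 hb1 b2 hb2 heq
      rw [mem_coe, mem_Icc] at hb1 hb2
      have e1 := congrArg (fun q => part q 2) heq
      simp only at e1
      rw [part_famA hn ho hb1.1 hb1.2 (by omega), part_famA hn ho hb2.1 hb2.2 (by omega)] at e1
      unfold fA at e1
      norm_num at e1
      exact e1
  · rw [Finset.disjoint_singleton_right]
    intro hmem
    rw [mem_image] at hmem
    obtain ⟨b, hb, heq⟩ := hmem
    rw [mem_Icc] at hb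
    have e1 := congrArg (fun q => part q 3) heq
    rw [part_famA hn ho hb.1 hb.2 (by omega), part_famB hn ho (by omega)] at e1
    unfold fA fB at e1
    norm_num at e1

open Classical in
lemma card_S_even {n : ℕ} (hn : 25 < n) (he : n % 2 = 0) :
    (Finset.univ.filter fun p : n.Partition => durfee p = 5 ∧ conj p = p).card = 1 := by
  classical
  have hset : (Finset.univ.filter fun p : n.Partition => durfee p = 5 ∧ conj p = p)
      = {famE n} := by
    ext p
    simp only [mem_filter, mem_univ, true_and, mem_singleton]
    constructor
    · rintro ⟨hd, hc⟩
      rcases classify hn p hd hc with ⟨ho, _⟩ | ⟨ho, _⟩ | ⟨_, rfl⟩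
      · omega
      · omega
      · rfl
    · rintro rfl
      exact ⟨durfee_famE hn he, conj_famE hn he⟩
  rw [hset, Finset.card_singleton]

end RFP

theorem R_five_parity (n : ℕ) (hn : 25 < n) :
    ((n % 8 = 5 ∨ n % 8 = 7) → Even (R 5 n)) ∧
    ((n % 8 = 0 ∨ n % 8 = 1 ∨ n % 8 = 2 ∨ n % 8 = 3 ∨ n % 8 = 4 ∨ n % 8 = 6) →
      Odd (R 5 n)) ∧
    (Even n → Odd (R 5 n)) := by
  classical
  have hmod := RFP.R_five_modEq (n := n) (by omega)
  rcases Nat.eq_zero_or_pos (n % 2) with hpar | hpar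
  · rw [RFP.card_S_even hn hpar] at hmod
    refine ⟨?_, ?_, ?_⟩
    · intro h; omega
    · intro _; rw [Nat.odd_iff]; omega
    · intro _; rw [Nat.odd_iff]; omega
  · have hpar' : n % 2 = 1 := by omega
    rw [RFP.card_S_odd hn hpar'] at hmod
    refine ⟨?_, ?_, ?_⟩
    · intro h; rw [Nat.even_iff]; omega
    · intro h; rw [Nat.odd_iff]; omega
    · intro h; rw [Nat.even_iff] at h; omega
end
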